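/- arXiv:2307.04594 — 10 statements merged into one kernel-verified Lean document; each statement's English description precedes it below -/
import Mathlib

section
/- For any graph G and vertices u, v with N(u) ⊆ N(v) (open neighborhoods), and any integer k ≥ 2: G is k-copwin if and only if the induced subgraph H = G[V(G) \ {u}] is k-copwin. -/
open SimpleGraph

variable {V : Type*}

/-- A (positional) strategy for `k` cops on the graph `G`: an initial placement and a
move function; each cop may stay or move to an adjacent vertex. -/
structure CopStrat (G : SimpleGraph V) (k : ℕ) where
  init : Fin k → V
  move : (Fin k → V) → V → Fin k → V
  valid : ∀ c r i, move c r i = c i ∨ G.Adj (c i) (move c r i)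

/-- A strategy for the robber: an initial placement (knowing the cops' placement) and a
move function; the robber may stay or move to an adjacent vertex. -/
structure RobStrat (G : SimpleGraph V) (k : ℕ) where
  init : (Fin k → V) → V
  move : (Fin k → V) → V → V
  valid : ∀ c r, move c r = r ∨ G.Adj r (move c r)

/-- The play determined by initial placements and move functions: position of the cops and
of the robber after `n` full rounds (cops move first in each round). -/
def gplay {k : ℕ} (ci : Fin k → V) (cm : (Fin k → V) → V → Fin k → V)
    (ri : (Fin k → V) → V) (rm : (Fin k → V) → V → V) : ℕ → (Fin k → V) × V
  | 0 => (ci, ri ci)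
  | n + 1 =>
    let p := gplay ci cm ri rm n
    let c' := cm p.1 p.2
    (c', rm c' p.2)

/-- The robber is caught: at some moment (either on a cops' move, or because the
positions already coincide) a cop occupies the robber's vertex. -/
def gCaught {k : ℕ} (ci : Fin k → V) (cm : (Fin k → V) → V → Fin k → V)
    (ri : (Fin k → V) → V) (rm : (Fin k → V) → V → V) : Prop :=
  ∃ n, ∃ i,
    (gplay ci cm ri rm n).1 i = (gplay ci cm ri rm n).2 ∨
      cm (gplay ci cm ri rm n).1 (gplay ci cm ri rm n).2 i = (gplay ci cm ri rm n).2

/-- `k` cops have a winning strategy on `G`. -/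
def CopsWin (G : SimpleGraph V) (k : ℕ) : Prop :=
  ∃ CS : CopStrat G k, ∀ RS : RobStrat G k,
    gCaught CS.init CS.move RS.init RS.move

/-- The cop number of `G`. -/
noncomputable def copNumber (G : SimpleGraph V) : ℕ := sInf {k | CopsWin G k}


namespace CopAux

variable {k : ℕ}

/-- a legal move of the cops -/
def CLegal (G : SimpleGraph V) (c c' : Fin k → V) : Prop :=
  ∀ i, c' i = c i ∨ G.Adj (c i) (c' i)

/-- a legal move of the robber -/
def RLegal (G : SimpleGraph V) (r r' : V) : Prop := r' = r ∨ G.Adj r r'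

lemma CLegal.refl (G : SimpleGraph V) (c : Fin k → V) : CLegal G c c :=
  fun _ => Or.inl rfl

/-- one step of the attractor construction -/
def F (G : SimpleGraph V) (k : ℕ) (S : Set ((Fin k → V) × V)) : Set ((Fin k → V) × V) :=
  {p | ∃ c', CLegal G p.1 c' ∧
    ((∃ i, c' i = p.2) ∨ ∀ r', RLegal G p.2 r' → (c', r') ∈ S)}

lemma F_mono (G : SimpleGraph V) {S T : Set ((Fin k → V) × V)} (h : S ⊆ T) :
    F G k S ⊆ F G k T := by
  rintro p ⟨c', hleg, hc⟩
  exact ⟨c', hleg, hc.imp id fun h' r' hr' => h (h' r' hr')⟩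

def W (G : SimpleGraph V) (k : ℕ) : ℕ → Set ((Fin k → V) × V)
  | 0 => ∅
  | n + 1 => F G k (W G k n)

lemma W_mono (G : SimpleGraph V) : Monotone (W G k) := by
  have h : ∀ n, W G k n ⊆ W G k (n + 1) := by
    intro n
    induction n with
    | zero => simp [W]
    | succ m ih => exact F_mono G ih
  exact monotone_nat_of_le_succ h

/-- cop-win positions -/
def Wt (G : SimpleGraph V) (k : ℕ) : Set ((Fin k → V) × V) := ⋃ n, W G k n

lemma W_subset_Wt (G : SimpleGraph V) (n : ℕ) : W G k n ⊆ Wt G k :=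
  Set.subset_iUnion (W G k) n

lemma catch_mem_Wt {G : SimpleGraph V} {c c' : Fin k → V} {r : V}
    (hleg : CLegal G c c') (i : Fin k) (hc : c' i = r) : (c, r) ∈ Wt G k :=
  W_subset_Wt G 1 ⟨c', hleg, Or.inl ⟨i, hc⟩⟩

/-- uniform bound for finitely many robber replies -/
lemma exists_uniform_bound [Finite V] {G : SimpleGraph V} {c' : Fin k → V} {r : V}
    (h : ∀ r', RLegal G r r' → (c', r') ∈ Wt G k) :
    ∃ N, ∀ r', RLegal G r r' → (c', r') ∈ W G k N := by
  have hne : Nonempty V := ⟨r⟩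
  have hch : ∀ r' : V, ∃ n, RLegal G r r' → (c', r') ∈ W G k n := by
    intro r'
    by_cases hr' : RLegal G r r'
    · obtain ⟨n, hn⟩ := Set.mem_iUnion.mp (h r' hr')
      exact ⟨n, fun _ => hn⟩
    · exact ⟨0, fun h' => absurd h' hr'⟩
  choose f hf using hch
  obtain ⟨r0, hr0⟩ := Finite.exists_max f
  exact ⟨f r0, fun r' hr' => W_mono G (hr0 r') (hf r' hr')⟩

lemma F_Wt_subset [Finite V] (G : SimpleGraph V) : F G k (Wt G k) ⊆ Wt G k := by
  rintro p ⟨c', hleg, hc⟩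
  rcases hc with hcatch | hall
  · exact W_subset_Wt G 1 ⟨c', hleg, Or.inl hcatch⟩
  · obtain ⟨N, hN⟩ := exists_uniform_bound hall
    exact W_subset_Wt G (N + 1) ⟨c', hleg, Or.inr hN⟩

/-- the escape property of the complement of `Wt` -/
lemma esc_prop [Finite V] {G : SimpleGraph V} {p : (Fin k → V) × V}
    (hp : p ∉ Wt G k) {c' : Fin k → V} (hleg : CLegal G p.1 c') :
    (∀ i, c' i ≠ p.2) ∧ ∃ r', RLegal G p.2 r' ∧ (c', r') ∉ Wt G k := by
  constructor
  · intro i hi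
    exact hp (catch_mem_Wt hleg i hi)
  · by_contra hno
    push_neg at hno
    exact hp (F_Wt_subset G ⟨c', hleg, Or.inr hno⟩)

/-- coinduction: any escape-closed set avoids `Wt` -/
lemma coind {G : SimpleGraph V} {S : Set ((Fin k → V) × V)}
    (hS : ∀ p ∈ S, ∀ c', CLegal G p.1 c' →
      (∀ i, c' i ≠ p.2) ∧ ∃ r', RLegal G p.2 r' ∧ (c', r') ∈ S) :
    ∀ p ∈ S, p ∉ Wt G k := by
  have key : ∀ n, ∀ p ∈ S, p ∉ W G k n := by
    intro n
    induction n with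
    | zero => intro p _ h; exact h.elim
    | succ m ih =>
      rintro p hp ⟨c', hleg, hc⟩
      obtain ⟨hnc, r', hr', hr'S⟩ := hS p hp c' hleg
      rcases hc with ⟨i, hi⟩ | hall
      · exact hnc i hi
      · exact ih _ hr'S (hall r' hr')
  intro p hp hw
  obtain ⟨n, hn⟩ := Set.mem_iUnion.mp hw
  exact key n p hp hn

section Strategy

variable {G : SimpleGraph V}

lemma Wt_unfold {p : (Fin k → V) × V} (h : p ∈ Wt G k) :
    ∃ c', CLegal G p.1 c' ∧
      ((∃ i, c' i = p.2) ∨ ∃ m, (∀ r', RLegal G p.2 r' → (c', r') ∈ W G k m) ∧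
        p ∉ W G k m) := by
  classical
  have hex : ∃ n, p ∈ W G k n := Set.mem_iUnion.mp h
  set n := Nat.find hex with hn
  have hpn : p ∈ W G k n := Nat.find_spec hex
  match hm : n, hpn with
  | 0, hpn => exact hpn.elim
  | m + 1, hpn =>
    obtain ⟨c', hleg, hc⟩ := hpn
    refine ⟨c', hleg, hc.imp id fun hall => ⟨m, hall, ?_⟩⟩
    have := Nat.find_min hex (m := m) (by omega)
    exact this

open Classical in
noncomputable def copMove (G : SimpleGraph V) (k : ℕ) (c : Fin k → V) (r : V) : Fin k → V :=
  if h : (c, r) ∈ Wt G k then Classical.choose (Wt_unfold h) else c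

lemma copMove_valid (c : Fin k → V) (r : V) : CLegal G c (copMove G k c r) := by
  classical
  unfold copMove
  split
  next h => exact (Classical.choose_spec (Wt_unfold h)).1
  next => exact CLegal.refl G c

lemma copMove_spec {c : Fin k → V} {r : V} (h : (c, r) ∈ Wt G k) :
    (∃ i, copMove G k c r i = r) ∨
      ∃ m, (∀ r', RLegal G r r' → (copMove G k c r, r') ∈ W G k m) ∧ (c, r) ∉ W G k m := by
  classical
  unfold copMove
  rw [dif_pos h]
  exact (Classical.choose_spec (Wt_unfold h)).2

/-- from a winning region certificate, build a winning cop strategy -/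
lemma copsWin_of (h : ∃ c0 : Fin k → V, ∀ r, (c0, r) ∈ Wt G k) : CopsWin G k := by
  obtain ⟨c0, hc0⟩ := h
  refine ⟨⟨c0, copMove G k, ?_⟩, ?_⟩
  · intro c r i
    exact (copMove_valid c r i).imp id id
  intro RS
  set ci := c0
  set cm := copMove G k
  set ri := RS.init
  set rm := RS.move
  have key : ∀ n m, gplay ci cm ri rm m ∈ W G k n → gCaught ci cm ri rm := by
    intro n
    induction n with
    | zero => intro m h; exact h.elim
    | succ N ih =>
      intro m hmem
      set p := gplay ci cm ri rm m with hp
      have hWt : p ∈ Wt G k := W_subset_Wt G (N+1) hmem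
      have hWt' : (p.1, p.2) ∈ Wt G k := hWt
      rcases copMove_spec hWt' with ⟨i, hi⟩ | ⟨mm, hall, hnot⟩
      · exact ⟨m, i, Or.inr hi⟩
      · have hrleg : RLegal G p.2 (rm (cm p.1 p.2) p.2) := by
          rcases RS.valid (cm p.1 p.2) p.2 with h1 | h1
          · exact Or.inl h1
          · exact Or.inr h1
        have hnext : gplay ci cm ri rm (m+1) ∈ W G k mm := by
          show (cm p.1 p.2, rm (cm p.1 p.2) p.2) ∈ W G k mm
          exact hall _ hrleg
        have hmmN : mm ≤ N := by
          by_contra hgt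
          push_neg at hgt
          exact hnot (W_mono G (by omega : N + 1 ≤ mm) hmem)
        exact ih (m+1) (W_mono G hmmN hnext)
  have h0 : gplay ci cm ri rm 0 ∈ Wt G k := hc0 (ri c0)
  obtain ⟨n, hn⟩ := Set.mem_iUnion.mp h0
  exact key n 0 hn

/-- conversely, a winning cop strategy yields the winning region certificate -/
lemma copsWin_to [Finite V] (h : CopsWin G k) : ∃ c0 : Fin k → V, ∀ r, (c0, r) ∈ Wt G k := by
  by_contra hno
  push_neg at hno
  obtain ⟨CS, hCS⟩ := h
  have hinit : ∀ c : Fin k → V, ∃ r, (c, r) ∉ Wt G k := hno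
  classical
  set rmv : (Fin k → V) → V → V := fun c r =>
    if h2 : ∃ r', RLegal G r r' ∧ (c, r') ∉ Wt G k then Classical.choose h2 else r with hrmv
  have hrmv_leg : ∀ c r, RLegal G r (rmv c r) := by
    intro c r
    simp only [hrmv]
    split
    next h2 => exact (Classical.choose_spec h2).1
    next => exact Or.inl rfl
  set RS : RobStrat G k :=
    ⟨fun c => Classical.choose (hinit c), rmv, by
      intro c r
      rcases hrmv_leg c r with h1 | h1
      · exact Or.inl h1
      · exact Or.inr h1⟩ with hRS
  set ci := CS.init
  set cm := CS.move
  set ri := RS.init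
  set rm := RS.move
  have hinv : ∀ m, gplay ci cm ri rm m ∉ Wt G k := by
    intro m
    induction m with
    | zero => exact Classical.choose_spec (hinit ci)
    | succ n ihn =>
      set p := gplay ci cm ri rm n with hp
      have hleg : CLegal G p.1 (cm p.1 p.2) := fun i => CS.valid p.1 p.2 i
      have hesc := (esc_prop ihn hleg).2
      have hex : ∃ r', RLegal G p.2 r' ∧ (cm p.1 p.2, r') ∉ Wt G k := hesc
      show (cm p.1 p.2, rm (cm p.1 p.2) p.2) ∉ Wt G k
      have : rm (cm p.1 p.2) p.2 = Classical.choose hex := by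
        show rmv (cm p.1 p.2) p.2 = _
        simp only [hrmv]
        rw [dif_pos hex]
      rw [this]
      exact (Classical.choose_spec hex).2
  obtain ⟨n, i, hcase⟩ := hCS RS
  set p := gplay ci cm ri rm n with hp
  rcases hcase with h1 | h1
  · exact hinv n (catch_mem_Wt (CLegal.refl G p.1) i h1)
  · have hleg : CLegal G p.1 (cm p.1 p.2) := fun j => CS.valid p.1 p.2 j
    exact hinv n (catch_mem_Wt hleg i h1)

lemma copsWin_iff_Wt [Finite V] : CopsWin G k ↔ ∃ c0 : Fin k → V, ∀ r, (c0, r) ∈ Wt G k :=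
  ⟨copsWin_to, copsWin_of⟩

end Strategy

end CopAux

set_option linter.unusedSectionVars false

namespace CopAux

section Graph

variable {k : ℕ} [Finite V] (G : SimpleGraph V) (u v : V)

open Classical in
/-- retraction collapsing `u` onto `v` -/
noncomputable def rho (huv : u ≠ v) : V → ({u}ᶜ : Set V) :=
  fun x => if h : x = u then ⟨v, by simpa using huv.symm⟩ else ⟨x, h⟩

variable {G u v}

lemma rho_ne (huv : u ≠ v) {x : V} (h : x ≠ u) : (rho u v huv x : V) = x := by
  classical
  unfold rho
  rw [dif_neg h]

lemma rho_u (huv : u ≠ v) : (rho u v huv u : V) = v := by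
  classical
  unfold rho
  rw [dif_pos rfl]

lemma induce_adj' {s : Set V} {a b : ↥s} (h : G.Adj a b) : (G.induce s).Adj a b := h

/-- the retraction maps legal single moves to legal single moves -/
lemma rho_move (huv : u ≠ v) (hN : G.neighborSet u ⊆ G.neighborSet v)
    {x y : V} (h : y = x ∨ G.Adj x y) :
    rho u v huv y = rho u v huv x ∨
      (G.induce ({u}ᶜ : Set V)).Adj (rho u v huv x) (rho u v huv y) := by
  rcases h with rfl | hadj
  · exact Or.inl rfl
  by_cases hx : x = u
  · have hy : y ≠ u := by
      intro h
      rw [hx, h] at hadj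
      exact G.irrefl hadj
    have hvy : G.Adj v y := hN (show G.Adj u y by rw [← hx]; exact hadj)
    by_cases hyv : y = v
    · left
      apply Subtype.ext
      show (rho u v huv y : V) = (rho u v huv x : V)
      rw [rho_ne huv hy, hx, rho_u huv]
      exact hyv
    · right
      apply induce_adj'
      show G.Adj (rho u v huv x : V) (rho u v huv y : V)
      rw [rho_ne huv hy, hx, rho_u huv]
      exact hvy
  · by_cases hy : y = u
    · have hvx : G.Adj v x := hN (show G.Adj u x by rw [← hy]; exact hadj.symm)
      by_cases hxv : x = v
      · left
        apply Subtype.ext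
        show (rho u v huv y : V) = (rho u v huv x : V)
        rw [rho_ne huv hx, hy, rho_u huv]
        exact hxv.symm
      · right
        apply induce_adj'
        show G.Adj (rho u v huv x : V) (rho u v huv y : V)
        rw [rho_ne huv hx, hy, rho_u huv]
        exact hvx.symm
    · right
      apply induce_adj'
      show G.Adj (rho u v huv x : V) (rho u v huv y : V)
      rw [rho_ne huv hx, rho_ne huv hy]
      exact hadj

/-- with at least two cops on a connected graph, a cop standing on `v` pins a robber
standing on the dominated vertex `u`: the position is cop-win. -/
lemma cop_at_v (hG : G.Connected) (hN : G.neighborSet u ⊆ G.neighborSet v)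
    (hk : 2 ≤ k) {c : Fin k → V} {j : Fin k} (hj : c j = v) : (c, u) ∈ Wt G k := by
  classical
  have h01 : (⟨0, by omega⟩ : Fin k) ≠ ⟨1, by omega⟩ := by
    intro h
    simpa using congrArg Fin.val h
  obtain ⟨i, hij⟩ : ∃ i : Fin k, i ≠ j := by
    by_cases h0 : (⟨0, by omega⟩ : Fin k) = j
    · exact ⟨⟨1, by omega⟩, fun h => h01 (h0.symm ▸ h.symm ▸ rfl)⟩
    · exact ⟨⟨0, by omega⟩, h0⟩
  have aux : ∀ d (c : Fin k → V), c j = v → G.dist (c i) u ≤ d → (c, u) ∈ Wt G k := by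
    intro d
    induction d with
    | zero =>
      intro c hcj hcd
      have : c i = u := hG.dist_eq_zero_iff.mp (Nat.le_zero.mp hcd)
      exact catch_mem_Wt (CLegal.refl G c) i this
    | succ d ih =>
      intro c hcj hcd
      by_cases hci : c i = u
      · exact catch_mem_Wt (CLegal.refl G c) i hci
      obtain ⟨w, hw⟩ := hG.exists_walk_length_eq_dist (c i) u
      cases w with
      | nil => exact absurd rfl hci
      | @cons _ b _ hab q =>
        have hbd : G.dist b u ≤ d := by
          have h1 : G.dist b u ≤ q.length := dist_le q
          have h2 : q.length + 1 = G.dist (c i) u := by simpa using hw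
          omega
        set c' := Function.update c i b with hc'
        have hleg : CLegal G c c' := by
          intro i'
          by_cases hii : i' = i
          · subst hii
            right
            rw [hc', Function.update_self]
            exact hab
          · left
            rw [hc', Function.update_of_ne hii]
        have hc'j : c' j = v := by
          rw [hc', Function.update_of_ne (Ne.symm hij), hcj]
        have hc'i : c' i = b := by rw [hc', Function.update_self]
        apply F_Wt_subset G
        refine ⟨c', hleg, Or.inr ?_⟩
        intro r' hr'
        rcases hr' with rfl | hadj
        · exact ih c' hc'j (hc'i ▸ hbd)
        · -- robber moved off `u` to a neighbor, which is adjacent to `v`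
          have hvr : G.Adj v r' := hN hadj
          set c'' := Function.update c' j r' with hc''
          have hleg2 : CLegal G c' c'' := by
            intro i'
            by_cases hjj : i' = j
            · subst hjj
              right
              rw [hc'', Function.update_self, hc'j]
              exact hvr
            · left
              rw [hc'', Function.update_of_ne hjj]
          exact catch_mem_Wt hleg2 j (by rw [hc'', Function.update_self])
  exact aux (G.dist (c i) u) c hj le_rfl

end Graph

end CopAux

open CopAux in
/-- For any graph `G` and distinct vertices `u, v` with `N(u) ⊆ N(v)`, and any `k ≥ 2`:
`G` is `k`-copwin iff the induced subgraph on `V(G) \ {u}` is `k`-copwin. -/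
theorem copsWin_iff_copsWin_delete_dominated_vertex
    {V : Type*} [Fintype V] (G : SimpleGraph V) (hG : G.Connected)
    (u v : V) (huv : u ≠ v) (hN : G.neighborSet u ⊆ G.neighborSet v)
    (k : ℕ) (hk : 2 ≤ k) :
    CopsWin G k ↔ CopsWin (G.induce ({u}ᶜ : Set V)) k := by
  classical
  rw [CopAux.copsWin_iff_Wt, CopAux.copsWin_iff_Wt, ← not_iff_not]
  push_neg
  constructor
  · -- no cop certificate on `G` ⇒ none on the induced subgraph
    intro hGno cH
    set H := G.induce ({u}ᶜ : Set V) with hHdef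
    set S : Set ((Fin k → ↥({u}ᶜ : Set V)) × ↥({u}ᶜ : Set V)) :=
      {q | ∃ rr : V, rho u v huv rr = q.2 ∧
        ((fun i => (q.1 i : V)), rr) ∉ Wt G k} with hS
    have hesc : ∀ q ∈ S, ∀ c', CLegal H q.1 c' →
        (∀ i, c' i ≠ q.2) ∧ ∃ r', RLegal H q.2 r' ∧ (c', r') ∈ S := by
      rintro ⟨c, r⟩ ⟨rr, hrr, hE⟩ c' hleg
      have hlegG : CLegal G (fun i => (c i : V)) (fun i => (c' i : V)) := by
        intro i
        rcases hleg i with h1 | h1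
        · exact Or.inl (congrArg _ h1)
        · exact Or.inr h1
      obtain ⟨hnc, rr', hrr'leg, hE'⟩ := esc_prop hE hlegG
      have hnov : rr = u → ∀ i, (c' i : V) ≠ v := by
        intro hrru i hvi
        rcases hrr'leg with rfl | hadj
        · rw [hrru] at hE'
          exact hE' (cop_at_v hG hN hk (c := fun i => (c' i : V)) (j := i) hvi)
        · rw [hrru] at hadj
          have hvr : G.Adj v rr' := hN hadj
          have hleg2 : CLegal G (fun i => (c' i : V))
              (Function.update (fun i => (c' i : V)) i rr') := by
            intro i'
            by_cases hii : i' = i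
            · right
              rw [hii, Function.update_self]
              show G.Adj (c' i : V) rr'
              rw [hvi]
              exact hvr
            · left
              rw [Function.update_of_ne hii]
          exact hE' (catch_mem_Wt hleg2 i (by rw [Function.update_self]))
      refine ⟨?_, rho u v huv rr', ?_, rr', rfl, hE'⟩
      · intro i hi
        by_cases hrru : rr = u
        · apply hnov hrru i
          rw [hi, ← hrr, hrru, rho_u huv]
        · apply hnc i
          show (c' i : V) = rr
          rw [hi, ← hrr, rho_ne huv hrru]
      · have h2 := rho_move huv hN hrr'leg
        rw [hrr] at h2
        exact h2
    obtain ⟨rr, hrr⟩ := hGno (fun i => (cH i : V))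
    exact ⟨rho u v huv rr, coind hesc (cH, rho u v huv rr) ⟨rr, rfl, hrr⟩⟩
  · -- no cop certificate on the induced subgraph ⇒ none on `G`
    intro hHno c
    set H := G.induce ({u}ᶜ : Set V) with hHdef
    set S : Set ((Fin k → V) × V) :=
      {p | ∃ h : p.2 ∈ ({u}ᶜ : Set V),
        ((fun i => rho u v huv (p.1 i)), (⟨p.2, h⟩ : ↥({u}ᶜ : Set V))) ∉ Wt H k} with hS
    have hesc : ∀ p ∈ S, ∀ c', CLegal G p.1 c' →
        (∀ i, c' i ≠ p.2) ∧ ∃ r', RLegal G p.2 r' ∧ (c', r') ∈ S := by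
      rintro ⟨c, r⟩ ⟨hru, hE⟩ c' hleg
      have hru' : r ≠ u := Set.mem_compl_singleton_iff.mp hru
      have hlegH : CLegal H (fun i => rho u v huv (c i)) (fun i => rho u v huv (c' i)) :=
        fun i => rho_move huv hN (hleg i)
      obtain ⟨hnc, rH', hr'leg, hE'⟩ := esc_prop hE hlegH
      refine ⟨?_, (rH' : V), ?_, rH'.2, ?_⟩
      · intro i hi
        apply hnc i
        apply Subtype.ext
        show (rho u v huv (c' i) : V) = r
        rw [rho_ne huv (by rw [hi]; exact hru'), hi]
      · rcases hr'leg with rfl | h1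
        · exact Or.inl rfl
        · exact Or.inr h1
      · exact hE'
    obtain ⟨rH, hrH⟩ := hHno (fun i => rho u v huv (c i))
    exact ⟨(rH : V), coind hesc (c, (rH : V)) ⟨rH.2, hrH⟩⟩
end

section
/- Let G be a connected graph and U ⊆ V(G) a set such that every connected component H of G[V(G) \ U] has cop number at most ℓ. Then the cop number of G satisfies c(G) ≤ ⌈|U|/2⌉ + ℓ. -/
open SimpleGraph

variable {V : Type*}

/-! The `⌈|U|/2⌉` first cops guard shortest paths between pairs of vertices of `U`, which cover `U`.
A guard walks onto its path and then moves towards the robber's *shadow*, the vertex of the path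
at the robber's distance from its start. Since the shadow moves by at most one step per round, the
guard eventually stands on the shadow after each of its moves, and from then on the robber cannot
stand on the path without being caught. So the robber ends up staying in a single component `H` of `G - U`. The other `ℓ`
cops then walk to the initial position of a winning strategy on `H` and play it.

The cops' win is analysed through `Catches`, capture in finitely many rounds from a given
position; from any other position the robber has an infinite escape, along which the two teams
are studied separately. -/

/-- Inductive, so the robber is caught after finitely many rounds whatever he does. -/
inductive Catches (G : SimpleGraph V) {k : ℕ} (mv : (Fin k → V) → V → Fin k → V) :
    (Fin k → V) → V → Prop
  | now {c : Fin k → V} {r : V} (i : Fin k) (h : c i = r ∨ mv c r i = r) : Catches G mv c r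
  | later {c : Fin k → V} {r : V}
      (h : ∀ r', r' = r ∨ G.Adj r r' → Catches G mv (mv c r) r') : Catches G mv c r

structure IsEscape (G : SimpleGraph V) {k : ℕ} (mv : (Fin k → V) → V → Fin k → V)
    (c : ℕ → Fin k → V) (r : ℕ → V) : Prop where
  cops_succ : ∀ n, c (n + 1) = mv (c n) (r n)
  robber_succ : ∀ n, r (n + 1) = r n ∨ G.Adj (r n) (r (n + 1))
  ne : ∀ n i, c n i ≠ r n
  ne_succ : ∀ n i, c (n + 1) i ≠ r n

section Game

variable {G : SimpleGraph V} {k : ℕ}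

theorem copsWin_of_catches (CS : CopStrat G k) (h : ∀ r, Catches G CS.move CS.init r) :
    CopsWin G k := by
  refine ⟨CS, fun RS => ?_⟩
  suffices ∀ c r, Catches G CS.move c r →
      ∀ n, gplay CS.init CS.move RS.init RS.move n = (c, r) →
        gCaught CS.init CS.move RS.init RS.move from this _ _ (h _) 0 rfl
  intro c r hc
  induction hc with
  | now i h => exact fun n hn => ⟨n, i, by simpa [hn] using h⟩
  | @later c r _ ih =>
    exact fun n hn => ih _ (RS.valid (CS.move c r) r) (n + 1) (by simp only [gplay, hn])

/-- The robber's strategy that always moves to a position from which the cops do not catch him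
is positional, so it is available to him in `CopsWin`. -/
theorem CopsWin.exists_catches (h : CopsWin G k) :
    ∃ CS : CopStrat G k, ∀ r, Catches G CS.move CS.init r := by
  classical
  obtain ⟨CS, hCS⟩ := h
  refine ⟨CS, fun r₀ => by_contra fun h₀ => ?_⟩
  let evade : (Fin k → V) → V → V := fun c r =>
    if h : ∃ r', (r' = r ∨ G.Adj r r') ∧ ¬ Catches G CS.move c r' then h.choose else r
  have evade_valid : ∀ c r, evade c r = r ∨ G.Adj r (evade c r) := by
    intro c r
    by_cases h : ∃ r', (r' = r ∨ G.Adj r r') ∧ ¬ Catches G CS.move c r'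
    · simpa only [evade, dif_pos h] using h.choose_spec.1
    · simp only [evade, dif_neg h, true_or]
  let RS : RobStrat G k := ⟨fun _ => r₀, evade, evade_valid⟩
  have never : ∀ n, ¬ Catches G CS.move (gplay CS.init CS.move RS.init RS.move n).1
      (gplay CS.init CS.move RS.init RS.move n).2 := by
    intro n
    induction n with
    | zero => exact h₀
    | succ n ih =>
      set p := gplay CS.init CS.move RS.init RS.move n
      have hex : ∃ r', (r' = p.2 ∨ G.Adj p.2 r') ∧ ¬ Catches G CS.move (CS.move p.1 p.2) r' := by
        by_contra! hall
        exact ih (Catches.later hall)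
      have hstep : (gplay CS.init CS.move RS.init RS.move (n + 1)).2 = hex.choose := dif_pos hex
      rw [hstep]
      exact hex.choose_spec.2
  obtain ⟨n, i, hcap⟩ := hCS RS
  exact never n (Catches.now i hcap)

theorem exists_isEscape_of_not_catches {mv : (Fin k → V) → V → Fin k → V} {c₀ : Fin k → V}
    {r₀ : V} (h : ¬ Catches G mv c₀ r₀) :
    ∃ c r, c 0 = c₀ ∧ r 0 = r₀ ∧ IsEscape G mv c r := by
  have step : ∀ p : (Fin k → V) × V, ¬ Catches G mv p.1 p.2 →
      ∃ r', (r' = p.2 ∨ G.Adj p.2 r') ∧ ¬ Catches G mv (mv p.1 p.2) r' := by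
    intro p hp
    by_contra! hall
    exact hp (Catches.later hall)
  choose next next_valid next_escapes using step
  let play : ℕ → {p : (Fin k → V) × V // ¬ Catches G mv p.1 p.2} := fun n =>
    Nat.rec ⟨(c₀, r₀), h⟩
      (fun _ p => ⟨(mv p.1.1 p.1.2, next p.1 p.2), next_escapes p.1 p.2⟩) n
  exact ⟨fun n => (play n).1.1, fun n => (play n).1.2, rfl, rfl,
    { cops_succ := fun _ => rfl
      robber_succ := fun n => next_valid _ (play n).2
      ne := fun n i hi => (play n).2 (Catches.now i (Or.inl hi))
      ne_succ := fun n i hi => (play n).2 (Catches.now i (Or.inr hi)) }⟩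

theorem IsEscape.shift {mv : (Fin k → V) → V → Fin k → V} {c : ℕ → Fin k → V} {r : ℕ → V}
    (h : IsEscape G mv c r) (T : ℕ) :
    IsEscape G mv (fun n => c (T + n)) (fun n => r (T + n)) where
  cops_succ n := h.cops_succ (T + n)
  robber_succ n := h.robber_succ (T + n)
  ne n := h.ne (T + n)
  ne_succ n := h.ne_succ (T + n)

end Game

section Teams

variable {G : SimpleGraph V} {a b : ℕ}

def CopStrat.append (CS₁ : CopStrat G a) (CS₂ : CopStrat G b) : CopStrat G (a + b) where
  init := Fin.append CS₁.init CS₂.init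
  move c r := Fin.append (CS₁.move (fun i => c (Fin.castAdd b i)) r)
    (CS₂.move (fun i => c (Fin.natAdd a i)) r)
  valid c r := Fin.addCases (fun i => by simpa using CS₁.valid _ r i)
    (fun i => by simpa using CS₂.valid _ r i)

@[simp]
theorem CopStrat.append_move_append (CS₁ : CopStrat G a) (CS₂ : CopStrat G b)
    (c₁ : Fin a → V) (c₂ : Fin b → V) (r : V) :
    (CS₁.append CS₂).move (Fin.append c₁ c₂) r = Fin.append (CS₁.move c₁ r) (CS₂.move c₂ r) := by
  simp [CopStrat.append]

theorem Catches.append_left {CS₁ : CopStrat G a} {c₁ : Fin a → V} {r : V}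
    (h : Catches G CS₁.move c₁ r) (CS₂ : CopStrat G b) (c₂ : Fin b → V) :
    Catches G (CS₁.append CS₂).move (Fin.append c₁ c₂) r := by
  induction h generalizing c₂ with
  | now i h => exact Catches.now (Fin.castAdd b i) (by simpa using h)
  | later _ ih => exact Catches.later fun r' hr' => by simpa using ih r' hr' (CS₂.move c₂ _)

theorem CopsWin.mono [Nonempty V] {k k' : ℕ} (h : CopsWin G k) (hk : k ≤ k') :
    CopsWin G k' := by
  obtain ⟨m, rfl⟩ := Nat.exists_eq_add_of_le hk
  obtain ⟨CS, hCS⟩ := h.exists_catches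
  let idle : CopStrat G m := ⟨fun _ => Classical.arbitrary V, fun c _ => c, fun _ _ _ => Or.inl rfl⟩
  exact copsWin_of_catches (CS.append idle) fun r => (hCS r).append_left idle idle.init

theorem IsEscape.append_left {CS₁ : CopStrat G a} {CS₂ : CopStrat G b}
    {c : ℕ → Fin (a + b) → V} {r : ℕ → V} (h : IsEscape G (CS₁.append CS₂).move c r) :
    IsEscape G CS₁.move (fun n i => c n (Fin.castAdd b i)) r where
  cops_succ n := by ext i; simp [h.cops_succ n, CopStrat.append]
  robber_succ := h.robber_succ
  ne n i := h.ne n _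
  ne_succ n i := h.ne_succ n _

theorem IsEscape.append_right {CS₁ : CopStrat G a} {CS₂ : CopStrat G b}
    {c : ℕ → Fin (a + b) → V} {r : ℕ → V} (h : IsEscape G (CS₁.append CS₂).move c r) :
    IsEscape G CS₂.move (fun n i => c n (Fin.natAdd a i)) r where
  cops_succ n := by ext i; simp [h.cops_succ n, CopStrat.append]
  robber_succ := h.robber_succ
  ne n i := h.ne n _
  ne_succ n i := h.ne_succ n _

end Teams

theorem exists_copsWin {W : Type*} [Finite W] (H : SimpleGraph W) :
    ∃ n, CopsWin H n := by
  obtain ⟨n, ⟨e⟩⟩ := Finite.exists_equiv_fin W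
  refine ⟨n, ⟨e.symm, fun c _ => c, fun _ _ _ => Or.inl rfl⟩, fun RS => ⟨0, e (RS.init e.symm), ?_⟩⟩
  left
  simp [gplay]

theorem copsWin_of_copNumber_le {W : Type*} [Finite W] [Nonempty W] {H : SimpleGraph W} {ℓ : ℕ}
    (h : copNumber H ≤ ℓ) : CopsWin H ℓ :=
  CopsWin.mono (Nat.sInf_mem (exists_copsWin H)) h

theorem exists_of_not_imp_or_lt {p : ℕ → Prop} (M : ℕ → ℕ)
    (h : ∀ n, ¬ p n → p (n + 1) ∨ M (n + 1) < M n) : ∃ n, p n := by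
  by_contra! hp
  have descent : ∀ n, M n + n ≤ M 0 := by
    intro n
    induction n with
    | zero => rfl
    | succ n ih => have := (h n (hp n)).resolve_left (hp _); omega
  have := descent (M 0 + 1)
  omega

theorem exists_forall_ge_of_not_imp_or_lt {p : ℕ → Prop} (M : ℕ → ℕ)
    (habs : ∀ n, p n → p (n + 1)) (h : ∀ n, ¬ p n → p (n + 1) ∨ M (n + 1) < M n) :
    ∃ T, ∀ n, T ≤ n → p n := by
  obtain ⟨T, hT⟩ := exists_of_not_imp_or_lt M h
  exact ⟨T, fun n hn => Nat.le_induction hT (fun n _ => habs n) n hn⟩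

theorem Finset.exists_pairs_cover {α : Type*} (s : Finset α) :
    ∃ a b : Fin ((s.card + 1) / 2) → α, ∀ x ∈ s, ∃ j, x = a j ∨ x = b j := by
  set m := s.card
  let e : Fin m ≃ s := s.equivFin.symm
  refine ⟨fun j => e ⟨2 * j, by omega⟩, fun j => e ⟨min (2 * j + 1) (m - 1), by omega⟩, ?_⟩
  intro x hx
  obtain ⟨i, hi⟩ := e.surjective ⟨x, hx⟩
  refine ⟨⟨i / 2, by omega⟩, ?_⟩
  rw [show x = e i by rw [hi]]
  rcases Nat.even_or_odd i with ⟨t, ht⟩ | ⟨t, ht⟩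
  · left
    congr 2
    ext
    simp only
    omega
  · right
    congr 2
    ext
    simp only
    omega

def toward (s t : ℕ) : ℕ := if s < t then s + 1 else if t < s then s - 1 else s

theorem toward_of_close {s t : ℕ} (h₁ : s ≤ t + 1) (h₂ : t ≤ s + 1) : toward s t = t := by
  unfold toward
  split_ifs <;> omega

theorem toward_le {s t L : ℕ} (hs : s ≤ L) (ht : t ≤ L) : toward s t ≤ L := by
  unfold toward
  split_ifs <;> omega

/-- A cop below its target index only climbs and one above it only descends, so this decreases
until the cop is next to its target. -/
def towardPotential (L s t : ℕ) : ℕ := if s ≤ t then L - s else s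

theorem towardPotential_le {L s t : ℕ} (hs : s ≤ L) : towardPotential L s t ≤ L := by
  unfold towardPotential
  split_ifs <;> omega

theorem toward_close_or_potential_lt {L s t t' : ℕ} (ht : t ≤ L)
    (ht' : t' ≤ t + 1 ∧ t ≤ t' + 1) :
    (toward s t ≤ t' + 1 ∧ t' ≤ toward s t + 1) ∨
      towardPotential L (toward s t) t' < towardPotential L s t := by
  unfold toward towardPotential
  split_ifs <;> omega

namespace SimpleGraph.Walk

variable {G : SimpleGraph V} {u v : V} (p : G.Walk u v)

theorem dist_start_getVert_of_length_eq_dist (hp : p.length = G.dist u v) {i : ℕ}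
    (hi : i ≤ p.length) : G.dist u (p.getVert i) = i := by
  rw [← length_eq_dist_of_subwalk hp (p.isSubwalk_take i), take_length]
  omega

theorem dist_getVert_end_of_length_eq_dist (hp : p.length = G.dist u v) (i : ℕ) :
    G.dist (p.getVert i) v = p.length - i := by
  rw [← length_eq_dist_of_subwalk hp (p.isSubwalk_drop i), drop_length]

noncomputable def projIndex (x : V) : ℕ := min (G.dist u x) p.length

theorem projIndex_le (x : V) : p.projIndex x ≤ p.length := min_le_right _ _

variable {p}

theorem projIndex_getVert (hp : p.length = G.dist u v) {i : ℕ} (hi : i ≤ p.length) :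
    p.projIndex (p.getVert i) = i := by
  rw [projIndex, dist_start_getVert_of_length_eq_dist p hp hi]
  omega

theorem getVert_projIndex (hp : p.length = G.dist u v) {x : V} (hx : x ∈ p.support) :
    p.getVert (p.projIndex x) = x := by
  obtain ⟨i, rfl, hi⟩ := mem_support_iff_exists_getVert.mp hx
  rw [projIndex_getVert hp hi]

theorem projIndex_close_of_eq_or_adj {x y : V} (h : y = x ∨ G.Adj x y) :
    p.projIndex y ≤ p.projIndex x + 1 ∧ p.projIndex x ≤ p.projIndex y + 1 := by
  unfold projIndex
  rcases h with rfl | h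
  · omega
  · rcases h.diff_dist_adj (u := u) with h' | h' | h' <;> omega

theorem getVert_toward_eq_or_adj {s t : ℕ} (hs : s ≤ p.length) (ht : t ≤ p.length) :
    p.getVert (toward s t) = p.getVert s ∨ G.Adj (p.getVert s) (p.getVert (toward s t)) := by
  unfold toward
  split_ifs with h₁ h₂
  · exact Or.inr (p.adj_getVert_succ (by omega))
  · have := p.adj_getVert_succ (i := s - 1) (by omega)
    rw [Nat.sub_add_cancel (by omega)] at this
    exact Or.inr this.symm
  · exact Or.inl rfl

end SimpleGraph.Walk

section Approach

variable {G : SimpleGraph V} (hG : G.Connected)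

noncomputable def approach (t v : V) : V :=
  (hG.exists_walk_length_eq_dist v t).choose.getVert 1

theorem dist_approach (t v : V) : G.dist (approach hG t v) t = G.dist v t - 1 := by
  have hp := (hG.exists_walk_length_eq_dist v t).choose_spec
  rw [approach, Walk.dist_getVert_end_of_length_eq_dist _ hp, hp]

theorem approach_eq_or_adj (t v : V) : approach hG t v = v ∨ G.Adj v (approach hG t v) := by
  set p := (hG.exists_walk_length_eq_dist v t).choose
  show p.getVert 1 = v ∨ G.Adj v (p.getVert 1)
  by_cases hv : v = t
  · subst hv
    left
    have : p.length = 0 := by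
      rw [(hG.exists_walk_length_eq_dist v v).choose_spec, SimpleGraph.dist_self]
    exact p.getVert_of_length_le (by omega)
  · right
    have hlen : 0 < p.length := by
      rw [(hG.exists_walk_length_eq_dist v t).choose_spec]
      exact hG.pos_dist_of_ne hv
    simpa using p.adj_getVert_succ hlen

end Approach

section Guard

variable {G : SimpleGraph V} (hG : G.Connected) {a b : V} (P : G.Walk a b)

open Classical in
noncomputable def guardMove (x r : V) : V :=
  if x ∈ P.support then P.getVert (toward (P.projIndex x) (P.projIndex r)) else approach hG a x

theorem guardMove_eq_or_adj (hP : P.length = G.dist a b) (x r : V) :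
    guardMove hG P x r = x ∨ G.Adj x (guardMove hG P x r) := by
  unfold guardMove
  split_ifs with hx
  · have := P.getVert_toward_eq_or_adj (P.projIndex_le x) (P.projIndex_le r)
    rwa [Walk.getVert_projIndex hP hx] at this
  · exact approach_eq_or_adj hG a x

def Shadows (x r : V) : Prop :=
  x ∈ P.support ∧ P.projIndex x ≤ P.projIndex r + 1 ∧ P.projIndex r ≤ P.projIndex x + 1

open Classical in
/-- Off the path the potential exceeds every value it takes on the path. -/
noncomputable def guardPotential (x r : V) : ℕ :=
  if x ∈ P.support then towardPotential P.length (P.projIndex x) (P.projIndex r)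
  else P.length + 1 + G.dist x a

variable {P}

theorem guardMove_of_shadows {x r : V} (h : Shadows P x r) :
    guardMove hG P x r = P.getVert (P.projIndex r) := by
  rw [guardMove, if_pos h.1, toward_of_close h.2.1 h.2.2]

theorem Shadows.guardMove (hP : P.length = G.dist a b) {x r r' : V} (h : Shadows P x r)
    (hr : r' = r ∨ G.Adj r r') : Shadows P (guardMove hG P x r) r' := by
  rw [guardMove_of_shadows hG h, Shadows, Walk.projIndex_getVert hP (P.projIndex_le r)]
  exact ⟨P.getVert_mem_support _, (Walk.projIndex_close_of_eq_or_adj hr).symm⟩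

theorem shadows_or_guardPotential_lt (hP : P.length = G.dist a b) {x r r' : V}
    (hr : r' = r ∨ G.Adj r r') :
    Shadows P (guardMove hG P x r) r' ∨
      guardPotential P (guardMove hG P x r) r' < guardPotential P x r := by
  by_cases hx : x ∈ P.support
  · set s := P.projIndex x
    have hs : P.projIndex (guardMove hG P x r) = toward s (P.projIndex r) := by
      rw [guardMove, if_pos hx,
        Walk.projIndex_getVert hP (toward_le (P.projIndex_le x) (P.projIndex_le r))]
    have hmem : guardMove hG P x r ∈ P.support := by
      rw [guardMove, if_pos hx]
      exact P.getVert_mem_support _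
    rcases toward_close_or_potential_lt (s := s) (L := P.length) (P.projIndex_le r)
      (Walk.projIndex_close_of_eq_or_adj hr) with h | h
    · exact Or.inl ⟨hmem, hs ▸ h⟩
    · right
      rwa [guardPotential, guardPotential, if_pos hmem, if_pos hx, hs]
  · right
    have hne : x ≠ a := fun h => hx (h ▸ P.start_mem_support)
    have hdist : G.dist (approach hG a x) a < G.dist x a := by
      rw [dist_approach]
      exact Nat.sub_lt (hG.pos_dist_of_ne hne) one_pos
    rw [guardPotential, guardPotential, if_neg hx, guardMove, if_neg hx]
    split_ifs
    · have := towardPotential_le (t := P.projIndex r') (P.projIndex_le (approach hG a x))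
      omega
    · omega

theorem exists_guardMove_eq_of_mem_support (hP : P.length = G.dist a b) {x r : ℕ → V}
    (hx : ∀ n, x (n + 1) = guardMove hG P (x n) (r n))
    (hr : ∀ n, r (n + 1) = r n ∨ G.Adj (r n) (r (n + 1))) :
    ∃ T, ∀ n, T ≤ n → r n ∈ P.support → x (n + 1) = r n := by
  obtain ⟨T, hT⟩ := exists_forall_ge_of_not_imp_or_lt (p := fun n => Shadows P (x n) (r n))
    (fun n => guardPotential P (x n) (r n))
    (fun n h => hx n ▸ h.guardMove hG hP (hr n))
    (fun n _ => hx n ▸ shadows_or_guardPotential_lt hG hP (hr n))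
  refine ⟨T, fun n hn hmem => ?_⟩
  rw [hx, guardMove_of_shadows hG (hT n hn), Walk.getVert_projIndex hP hmem]

end Guard

section GuardTeam

variable {G : SimpleGraph V} (hG : G.Connected) {g : ℕ} {a b : Fin g → V}
  (P : ∀ j, G.Walk (a j) (b j)) (hP : ∀ j, (P j).length = G.dist (a j) (b j))

noncomputable def guardStrat : CopStrat G g where
  init := a
  move c r j := guardMove hG (P j) (c j) r
  valid c r j := guardMove_eq_or_adj hG (P j) (hP j) (c j) r

theorem IsEscape.exists_forall_ge_notMem_support {c : ℕ → Fin g → V} {r : ℕ → V}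
    (h : IsEscape G (guardStrat hG P hP).move c r) :
    ∃ T, ∀ n, T ≤ n → ∀ j, r n ∉ (P j).support := by
  choose T hT using fun j => exists_guardMove_eq_of_mem_support hG (hP j) (x := fun n => c n j)
    (fun n => congrFun (h.cops_succ n) j) h.robber_succ
  refine ⟨Finset.univ.sup T, fun n hn j hmem => h.ne_succ n j ?_⟩
  exact hT j n ((Finset.le_sup (Finset.mem_univ j)).trans hn) hmem

end GuardTeam

theorem SimpleGraph.induce_eq_or_adj {G : SimpleGraph V} {s : Set V} {x y : s}
    (h : (y : V) = x ∨ G.Adj x y) : y = x ∨ (G.induce s).Adj x y :=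
  h.imp Subtype.ext id

theorem SimpleGraph.connectedComponentMk_eq_of_eq_or_adj {G : SimpleGraph V} {x y : V}
    (h : y = x ∨ G.Adj x y) : G.connectedComponentMk y = G.connectedComponentMk x := by
  rcases h with rfl | h
  · rfl
  · exact ConnectedComponent.sound h.reachable.symm

section Chase

variable {G : SimpleGraph V} {S : Set V}

def componentEmb (C : (G.induce S).ConnectedComponent) : (G.induce S).induce C.supp ↪g G :=
  (Embedding.induce S).comp (Embedding.induce C.supp)

variable {ℓ : ℕ}
  (σ : ∀ C : (G.induce S).ConnectedComponent, CopStrat ((G.induce S).induce C.supp) ℓ)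

def ChaseMode (c : Fin ℓ → V) (r : V) : Prop :=
  ∃ (C : (G.induce S).ConnectedComponent) (x : Fin ℓ → C.supp) (y : C.supp),
    componentEmb C ∘ x = c ∧ componentEmb C y = r ∧
      Catches ((G.induce S).induce C.supp) (σ C).move x y

def chaseTarget (C : (G.induce S).ConnectedComponent) : Fin ℓ → V :=
  componentEmb C ∘ (σ C).init

theorem componentEmb_comp_move_congr {C₁ C₂ : (G.induce S).ConnectedComponent}
    {x₁ : Fin ℓ → C₁.supp} {y₁ : C₁.supp} {x₂ : Fin ℓ → C₂.supp} {y₂ : C₂.supp}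
    (hx : componentEmb C₁ ∘ x₁ = componentEmb C₂ ∘ x₂)
    (hy : componentEmb C₁ y₁ = componentEmb C₂ y₂) :
    componentEmb C₁ ∘ (σ C₁).move x₁ y₁ = componentEmb C₂ ∘ (σ C₂).move x₂ y₂ := by
  obtain rfl : C₁ = C₂ := by
    rw [← (ConnectedComponent.mem_supp_iff _ _).mp y₁.2,
      ← (ConnectedComponent.mem_supp_iff _ _).mp y₂.2, show (y₁ : S) = y₂ from Subtype.ext hy]
  obtain rfl : x₁ = x₂ := funext fun i => (componentEmb C₁).injective (congrFun hx i)
  obtain rfl : y₁ = y₂ := (componentEmb C₁).injective hy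
  rfl

variable (hG : G.Connected)

open Classical in
/-- Recognising the chase from the position alone, through `ChaseMode`, keeps the strategy
positional: once the cops stand where the strategy of the robber's component catches him,
they follow it, and before that they walk to its initial position. -/
noncomputable def chaseMove (c : Fin ℓ → V) (r : V) : Fin ℓ → V :=
  if h : ChaseMode σ c r then
    componentEmb h.choose ∘
      (σ h.choose).move h.choose_spec.choose h.choose_spec.choose_spec.choose
  else if hr : r ∈ S then
    fun i => approach hG (chaseTarget σ ((G.induce S).connectedComponentMk ⟨r, hr⟩) i) (c i)
  else c

theorem chaseMove_of_catches {C : (G.induce S).ConnectedComponent} {x : Fin ℓ → C.supp}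
    {y : C.supp} (h : Catches ((G.induce S).induce C.supp) (σ C).move x y) :
    chaseMove σ hG (componentEmb C ∘ x) (componentEmb C y) = componentEmb C ∘ (σ C).move x y := by
  have hmode : ChaseMode σ (componentEmb C ∘ x) (componentEmb C y) := ⟨C, x, y, rfl, rfl, h⟩
  rw [chaseMove, dif_pos hmode]
  obtain ⟨hx, hy, -⟩ := hmode.choose_spec.choose_spec.choose_spec
  exact componentEmb_comp_move_congr σ hx hy

theorem chaseMove_of_not_chaseMode {c : Fin ℓ → V} {r : V} (h : ¬ ChaseMode σ c r) (hr : r ∈ S) :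
    chaseMove σ hG c r =
      fun i => approach hG (chaseTarget σ ((G.induce S).connectedComponentMk ⟨r, hr⟩) i) (c i) := by
  rw [chaseMove, dif_neg h, dif_pos hr]

noncomputable def chaseStrat (v₀ : V) : CopStrat G ℓ where
  init _ := v₀
  move := chaseMove σ hG
  valid c r i := by
    by_cases hmode : ChaseMode σ c r
    · obtain ⟨C, x, y, rfl, rfl, hcat⟩ := hmode
      rw [chaseMove_of_catches σ hG hcat]
      exact ((σ C).valid x y i).imp (congrArg (componentEmb C)) (componentEmb C).map_adj_iff.mpr
    · by_cases hr : r ∈ S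
      · rw [chaseMove_of_not_chaseMode σ hG hmode hr]
        exact approach_eq_or_adj hG _ _
      · simp [chaseMove, hmode, hr]

variable {σ} {c : ℕ → Fin ℓ → V} {r : ℕ → V}

theorem IsEscape.not_chaseMode (h : IsEscape G (chaseMove σ hG) c r) (hS : ∀ n, r n ∈ S) (n : ℕ) :
    ¬ ChaseMode σ (c n) (r n) := by
  rintro ⟨C, x, y, hx, hy, hcat⟩
  induction hcat generalizing n with
  | @now x y i hi =>
    rcases hi with hi | hi
    · exact h.ne n i (by rw [← hx, ← hy]; exact congrArg (componentEmb C) hi)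
    · refine h.ne_succ n i ?_
      rw [h.cops_succ, ← hx, ← hy, chaseMove_of_catches σ hG (Catches.now i (Or.inr hi))]
      exact congrArg (componentEmb C) hi
  | @later x y hlater ih =>
    have hstep : (⟨r (n + 1), hS _⟩ : S) = y ∨ (G.induce S).Adj y ⟨r (n + 1), hS _⟩ :=
      induce_eq_or_adj (by rw [show ((y : S) : V) = r n from hy]; exact h.robber_succ n)
    have hmem : (⟨r (n + 1), hS _⟩ : S) ∈ C.supp := by
      rw [ConnectedComponent.mem_supp_iff, connectedComponentMk_eq_of_eq_or_adj hstep]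
      exact y.2
    refine ih ⟨_, hmem⟩ (induce_eq_or_adj hstep) (n + 1) ?_ rfl
    rw [h.cops_succ, ← hx, ← hy, chaseMove_of_catches σ hG (Catches.later hlater)]

theorem IsEscape.exists_chaseMode
    (hσ : ∀ C y, Catches ((G.induce S).induce C.supp) (σ C).move (σ C).init y)
    (h : IsEscape G (chaseMove σ hG) c r) (hS : ∀ n, r n ∈ S) :
    ∃ n, ChaseMode σ (c n) (r n) := by
  set C₀ := (G.induce S).connectedComponentMk ⟨r 0, hS 0⟩
  have hC : ∀ n, (G.induce S).connectedComponentMk ⟨r n, hS n⟩ = C₀ := by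
    intro n
    induction n with
    | zero => rfl
    | succ n ih =>
      rw [connectedComponentMk_eq_of_eq_or_adj
        (induce_eq_or_adj (x := ⟨r n, hS n⟩) (y := ⟨r (n + 1), hS _⟩) (h.robber_succ n)), ih]
  refine exists_of_not_imp_or_lt (fun n => ∑ i, G.dist (c n i) (chaseTarget σ C₀ i))
    fun n hn => Or.inr ?_
  have hmove : c (n + 1) = fun i => approach hG (chaseTarget σ C₀ i) (c n i) := by
    rw [h.cops_succ, chaseMove_of_not_chaseMode σ hG hn (hS n), hC]
  obtain ⟨i₀, hi₀⟩ : ∃ i, c n i ≠ chaseTarget σ C₀ i := by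
    by_contra! hall
    exact hn ⟨C₀, (σ C₀).init, ⟨⟨r n, hS n⟩, hC n⟩, (funext hall).symm, rfl, hσ _ _⟩
  simp only [hmove, dist_approach]
  exact Finset.sum_lt_sum (fun i _ => Nat.sub_le _ _)
    ⟨i₀, Finset.mem_univ _, Nat.sub_lt (hG.pos_dist_of_ne hi₀) one_pos⟩

end Chase

/-- If every connected component of `G − U` has cop number at most `ℓ`, then
`c(G) ≤ ⌈|U|/2⌉ + ℓ`. -/
theorem copNumber_le_of_components_of_delete
    {V : Type*} [Fintype V] (G : SimpleGraph V) (hG : G.Connected)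
    (U : Finset V) (ℓ : ℕ)
    (h : ∀ c : (G.induce ((↑U : Set V)ᶜ)).ConnectedComponent,
      copNumber ((G.induce ((↑U : Set V)ᶜ)).induce c.supp) ≤ ℓ) :
    copNumber G ≤ (U.card + 1) / 2 + ℓ := by
  obtain ⟨v₀⟩ := hG.nonempty
  obtain ⟨a, b, hab⟩ := U.exists_pairs_cover
  choose P hP using fun j => hG.exists_walk_length_eq_dist (a j) (b j)
  have hcomp (C : (G.induce ((↑U : Set V)ᶜ)).ConnectedComponent) :
      ∃ CS : CopStrat ((G.induce ((↑U : Set V)ᶜ)).induce C.supp) ℓ,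
        ∀ y, Catches _ CS.move CS.init y :=
    have : Nonempty C.supp := C.nonempty_supp.to_subtype
    (copsWin_of_copNumber_le (h C)).exists_catches
  choose σ hσ using hcomp
  refine Nat.sInf_le (copsWin_of_catches ((guardStrat hG P hP).append (chaseStrat σ hG v₀))
    fun r₀ => by_contra fun hnc => ?_)
  obtain ⟨c, r, -, -, hesc⟩ := exists_isEscape_of_not_catches hnc
  obtain ⟨T, hT⟩ := hesc.append_left.exists_forall_ge_notMem_support
  have hS (n : ℕ) : r (T + n) ∈ (↑U : Set V)ᶜ := fun hn => by
    obtain ⟨j, hj | hj⟩ := hab _ hn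
    · exact hT _ (Nat.le_add_right T n) j (by rw [hj]; exact (P j).start_mem_support)
    · exact hT _ (Nat.le_add_right T n) j (by rw [hj]; exact (P j).end_mem_support)
  have hchase := hesc.append_right.shift T
  obtain ⟨n, hn⟩ := hchase.exists_chaseMode hG hσ hS
  exact hchase.not_chaseMode hG hS n hn
end

section
/- Let G be a connected graph, U a vertex cover of G, and I = V(G) \ U the corresponding independent set. Suppose that: (1) every vertex v ∈ I has |N(v)| ≤ 2; (2) every vertex v ∈ U satisfies |N[v] ∩ U| ≤ 2; and (3) every isometric path in G contains at most 2 vertices of U. Then for every two distinct vertices x, y ∈ U, either xy ∈ E(G) or there exists a vertex w ∈ I adjacent to both x and y. -/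
open SimpleGraph

lemma three_le_ncard_of_mem {V : Type*} {S : Set V} (hS : S.Finite) {a b c : V}
    (ha : a ∈ S) (hb : b ∈ S) (hc : c ∈ S)
    (hab : a ≠ b) (hac : a ≠ c) (hbc : b ≠ c) : 3 ≤ S.ncard := by
  have hsub : ({a, b, c} : Set V) ⊆ S := by
    intro z hz
    rcases hz with rfl | rfl | rfl <;> assumption
  have h3 : ({a, b, c} : Set V).ncard = 3 :=
    Set.ncard_eq_three.mpr ⟨a, b, c, hab, hac, hbc, rfl⟩
  calc 3 = ({a, b, c} : Set V).ncard := h3.symm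
    _ ≤ S.ncard := Set.ncard_le_ncard hsub hS

/-- Structural lemma: if `U` is a vertex cover with independent complement `I`,
every vertex of `I` has at most 2 neighbours, every `v ∈ U` has `|N[v] ∩ U| ≤ 2`, and
every isometric path contains at most 2 vertices of `U`, then any two distinct vertices
of `U` are adjacent or have a common neighbour in `I`. -/
theorem vertexCover_adjacent_or_common_neighbor
    {V : Type*} [Fintype V] (G : SimpleGraph V) (hG : G.Connected)
    (U I : Set V) (hI : I = Uᶜ)
    (hVC : ∀ ⦃x y : V⦄, G.Adj x y → x ∈ U ∨ y ∈ U)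
    (h1 : ∀ v ∈ I, (G.neighborSet v).ncard ≤ 2)
    (h2 : ∀ v ∈ U, ((insert v (G.neighborSet v)) ∩ U).ncard ≤ 2)
    (h3 : ∀ (a b : V) (p : G.Walk a b), p.IsPath → p.length = G.dist a b →
      {x | x ∈ p.support ∧ x ∈ U}.ncard ≤ 2) :
    ∀ x ∈ U, ∀ y ∈ U, x ≠ y →
      G.Adj x y ∨ ∃ w ∈ I, G.Adj w x ∧ G.Adj w y := by
  intro x hx y hy hxy
  classical
  obtain ⟨p, hp⟩ := hG.exists_walk_length_eq_dist x y
  have hqpath : p.bypass.IsPath := p.bypass_isPath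
  have hqlen : p.bypass.length = G.dist x y :=
    le_antisymm (hp ▸ p.length_bypass_le) (G.dist_le p.bypass)
  have key := h3 x y p.bypass hqpath hqlen
  generalize hq : p.bypass = q at *
  clear hq hp p
  cases q with
  | nil => exact absurd rfl hxy
  | @cons _ v _ h q' =>
    cases q' with
    | nil => exact Or.inl h
    | @cons _ w _ h' q'' =>
      rw [Walk.cons_isPath_iff] at hqpath
      obtain ⟨hpath', hxns⟩ := hqpath
      rw [Walk.cons_isPath_iff] at hpath'
      obtain ⟨hpath'', hvns⟩ := hpath'
      cases q'' with
      | nil =>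
        -- path x - v - y : show v ∈ I
        right
        refine ⟨v, ?_, h.symm, h'⟩
        rw [hI, Set.mem_compl_iff]
        intro hvU
        exact absurd key (not_le.mpr (lt_of_lt_of_le (by norm_num)
          (three_le_ncard_of_mem (Set.toFinite _) (a := x) (b := v) (c := y)
            ⟨by simp, hx⟩ ⟨by simp, hvU⟩ ⟨by simp, hy⟩
            h.ne hxy h'.ne)))
      | @cons _ u _ h'' q''' =>
        -- path has ≥ 3 edges: v and w are internal, both must be in I,
        -- but v adj w contradicts vertex cover property.
        exfalso
        have hyq''' : y ∈ q'''.support := Walk.end_mem_support q'''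
        have hwmem : w ∈ (Walk.cons h'' q''').support := Walk.start_mem_support _
        have hymem : y ∈ (Walk.cons h'' q''').support := Walk.end_mem_support _
        rw [Walk.cons_isPath_iff] at hpath''
        obtain ⟨hpath''', hwns⟩ := hpath''
        have hvy : v ≠ y := fun e => hvns (e ▸ hymem)
        have hwx : w ≠ x := fun e => hxns (by simp [← e, hwmem])
        have hwy : w ≠ y := fun e => hwns (e ▸ hyq''')
        have hvU : v ∉ U := by
          intro hvU
          exact absurd key (not_le.mpr (lt_of_lt_of_le (by norm_num)
            (three_le_ncard_of_mem (Set.toFinite _) (a := x) (b := v) (c := y)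
              ⟨by simp, hx⟩ ⟨by simp, hvU⟩ ⟨by simp, hy⟩
              h.ne hxy hvy)))
        have hwU : w ∉ U := by
          intro hwU
          exact absurd key (not_le.mpr (lt_of_lt_of_le (by norm_num)
            (three_le_ncard_of_mem (Set.toFinite _) (a := x) (b := w) (c := y)
              ⟨by simp, hx⟩ ⟨by simp [hwmem], hwU⟩ ⟨by simp, hy⟩
              (Ne.symm hwx) hxy hwy)))
        rcases hVC h' with h | h
        · exact hvU h
        · exact hwU h
end

section
/- Under the hypotheses of the previous structural lemma (vertex cover U, independent set I, every vertex in I has at most 2 neighbors, every u ∈ U has |N[u] ∩ U| ≤ 2, and every isometric path contains at most 2 vertices of U), the cop number of each connected component of G is at most 2. -/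
open SimpleGraph

variable {V : Type*}

namespace CRAux

open scoped Classical

variable {W : Type*} (H : SimpleGraph W) (U : Set W) (u0 : W)

/-- closed-neighbourhood relation -/
def cov (x y : W) : Prop := x = y ∨ H.Adj x y

lemma cov_refl (x : W) : cov H x x := Or.inl rfl

lemma cov_symm {x y : W} (h : cov H x y) : cov H y x := by
  rcases h with h | h
  · exact Or.inl h.symm
  · exact Or.inr h.symm

lemma cov_of_adj {x y : W} (h : H.Adj x y) : cov H x y := Or.inr h

/-- move from `x` towards covering `y` -/
noncomputable def tow (x y : W) : W :=
  if h : ∃ t, cov H x t ∧ cov H y t then h.choose else x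

lemma tow_cov_left (x y : W) : cov H x (tow H x y) := by
  unfold tow; split
  · next h => exact h.choose_spec.1
  · exact cov_refl H x

lemma tow_cov_right {x y : W} (h : ∃ t, cov H x t ∧ cov H y t) :
    cov H y (tow H x y) := by
  unfold tow; rw [dif_pos h]; exact h.choose_spec.2

noncomputable def uproj (x : W) : W :=
  if h : ∃ s, s ∈ U ∧ H.Adj x s then h.choose else x

lemma uproj_cov (x : W) : cov H x (uproj H U x) := by
  unfold uproj; split
  · next h => exact Or.inr h.choose_spec.2
  · exact cov_refl H x

noncomputable def smart (x r : W) : W :=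
  if h : ∃ s, s ∈ U ∧ H.Adj x s ∧ cov H s r then h.choose else uproj H U x

lemma smart_cov (x r : W) : cov H x (smart H U x r) := by
  unfold smart; split
  · next h => exact Or.inr h.choose_spec.2.1
  · exact uproj_cov H U x

lemma smart_spec {x r : W} (h : ∃ s, s ∈ U ∧ H.Adj x s ∧ cov H s r) :
    smart H U x r ∈ U ∧ H.Adj x (smart H U x r) ∧ cov H (smart H U x r) r := by
  unfold smart; rw [dif_pos h]; exact h.choose_spec

noncomputable def chase (x T : W) : W :=
  if cov H x T then T else if x ∈ U then tow H x T else uproj H U x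

lemma chase_cov_self (x T : W) : cov H x (chase H U x T) := by
  unfold chase; split
  · next h => exact h
  · split
    · exact tow_cov_left H x T
    · exact uproj_cov H U x

lemma chase_at {x T : W} (h : cov H x T) : chase H U x T = T := by
  unfold chase; rw [if_pos h]

lemma chase_covT (hL : ∀ u ∈ U, ∀ v ∈ U, ∃ t, cov H u t ∧ cov H v t)
    {x T : W} (hx : x ∈ U) (hT : T ∈ U) : cov H T (chase H U x T) := by
  unfold chase
  by_cases h : cov H x T
  · rw [if_pos h]; exact cov_refl H T
  · rw [if_neg h, if_pos hx]; exact tow_cov_right H (hL x hx T hT)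

/-- the canonical (at most two) neighbours of a vertex -/
def nbrProp (r A B : W) : Prop :=
  H.Adj r A ∧ H.Adj r B ∧ ∀ z, H.Adj r z → z = A ∨ z = B

noncomputable def nA (r : W) : W :=
  if h : ∃ A B, nbrProp H r A B then h.choose else u0

noncomputable def nB (r : W) : W :=
  if h : ∃ A B, nbrProp H r A B then h.choose_spec.choose else u0

lemma nbr_spec {r : W} (h : ∃ A B, nbrProp H r A B) :
    nbrProp H r (nA H u0 r) (nB H u0 r) := by
  unfold nA nB; rw [dif_pos h, dif_pos h]; exact h.choose_spec.choose_spec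

/-- the cops' joint move -/
noncomputable def cmP (c0 c1 r : W) : W × W :=
  if cov H c0 r then (r, c1)
  else if cov H c1 r then (c0, r)
  else if r ∈ U then
    (if c0 ∈ U ∧ c1 ∈ U then (c0, tow H c1 r)
     else if c0 ∈ U then (tow H c0 r, smart H U c1 r)
     else if c1 ∈ U then (smart H U c0 r, tow H c1 r)
     else (uproj H U c0, uproj H U c1))
  else
    (if cov H c0 (nA H u0 r) ∧ (c1 ∈ U ∨ cov H c1 (nB H u0 r)) then
        (chase H U c0 (nA H u0 r), chase H U c1 (nB H u0 r))
     else if cov H c0 (nB H u0 r) ∧ (c1 ∈ U ∨ cov H c1 (nA H u0 r)) then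
        (chase H U c0 (nB H u0 r), chase H U c1 (nA H u0 r))
     else if cov H c1 (nA H u0 r) ∧ (c0 ∈ U ∨ cov H c0 (nB H u0 r)) then
        (chase H U c0 (nB H u0 r), chase H U c1 (nA H u0 r))
     else if cov H c1 (nB H u0 r) ∧ (c0 ∈ U ∨ cov H c0 (nA H u0 r)) then
        (chase H U c0 (nA H u0 r), chase H U c1 (nB H u0 r))
     else (chase H U c0 (nA H u0 r), chase H U c1 (nB H u0 r)))

lemma cmP_valid (c0 c1 r : W) :
    cov H c0 (cmP H U u0 c0 c1 r).1 ∧ cov H c1 (cmP H U u0 c0 c1 r).2 := by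
  unfold cmP
  split
  · next h => exact ⟨h, cov_refl H c1⟩
  · split
    · next h => exact ⟨cov_refl H c0, h⟩
    · split
      · split
        · exact ⟨cov_refl H c0, tow_cov_left H c1 r⟩
        · split
          · exact ⟨tow_cov_left H c0 r, smart_cov H U c1 r⟩
          · split
            · exact ⟨smart_cov H U c0 r, tow_cov_left H c1 r⟩
            · exact ⟨uproj_cov H U c0, uproj_cov H U c1⟩
      · split
        · exact ⟨chase_cov_self H U c0 _, chase_cov_self H U c1 _⟩
        · split
          · exact ⟨chase_cov_self H U c0 _, chase_cov_self H U c1 _⟩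
          · split
            · exact ⟨chase_cov_self H U c0 _, chase_cov_self H U c1 _⟩
            · split
              · exact ⟨chase_cov_self H U c0 _, chase_cov_self H U c1 _⟩
              · exact ⟨chase_cov_self H U c0 _, chase_cov_self H U c1 _⟩

lemma cmP_catch {c0 c1 r : W} (h : cov H c0 r ∨ cov H c1 r) :
    (cmP H U u0 c0 c1 r).1 = r ∨ (cmP H U u0 c0 c1 r).2 = r := by
  unfold cmP
  by_cases h0 : cov H c0 r
  · rw [if_pos h0]; exact Or.inl rfl
  · rw [if_neg h0, if_pos (h.resolve_left h0)]; exact Or.inr rfl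

lemma cmP_UU {c0 c1 r : W} (h0 : ¬ cov H c0 r) (h1 : ¬ cov H c1 r) (hr : r ∈ U)
    (hc0 : c0 ∈ U) (hc1 : c1 ∈ U) :
    cmP H U u0 c0 c1 r = (c0, tow H c1 r) := by
  unfold cmP; rw [if_neg h0, if_neg h1, if_pos hr, if_pos ⟨hc0, hc1⟩]

lemma cmP_UI {c0 c1 r : W} (h0 : ¬ cov H c0 r) (h1 : ¬ cov H c1 r) (hr : r ∈ U)
    (hc0 : c0 ∈ U) (hc1 : c1 ∉ U) :
    cmP H U u0 c0 c1 r = (tow H c0 r, smart H U c1 r) := by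
  unfold cmP
  rw [if_neg h0, if_neg h1, if_pos hr, if_neg (by tauto), if_pos hc0]

end CRAux
namespace CRAux

open scoped Classical

variable {W : Type*} (H : SimpleGraph W) (U : Set W) (u0 : W)

def hpin (c0 c1 A B : W) : Prop :=
  (cov H c0 A ∧ (c1 ∈ U ∨ cov H c1 B)) ∨ (cov H c0 B ∧ (c1 ∈ U ∨ cov H c1 A)) ∨
  (cov H c1 A ∧ (c0 ∈ U ∨ cov H c0 B)) ∨ (cov H c1 B ∧ (c0 ∈ U ∨ cov H c0 A))

lemma cmP_I_shape {c0 c1 r : W} (h0 : ¬ cov H c0 r) (h1 : ¬ cov H c1 r) (hr : r ∉ U) :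
    ∃ X Y, ((X = nA H u0 r ∧ Y = nB H u0 r) ∨ (X = nB H u0 r ∧ Y = nA H u0 r)) ∧
      cmP H U u0 c0 c1 r = (chase H U c0 X, chase H U c1 Y) := by
  unfold cmP
  rw [if_neg h0, if_neg h1, if_neg hr]
  split_ifs with hs1 hs2 hs3 hs4
  · exact ⟨_, _, Or.inl ⟨rfl, rfl⟩, rfl⟩
  · exact ⟨_, _, Or.inr ⟨rfl, rfl⟩, rfl⟩
  · exact ⟨_, _, Or.inr ⟨rfl, rfl⟩, rfl⟩
  · exact ⟨_, _, Or.inl ⟨rfl, rfl⟩, rfl⟩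
  · exact ⟨_, _, Or.inl ⟨rfl, rfl⟩, rfl⟩

lemma cmP_pin {c0 c1 r : W} (h0 : ¬ cov H c0 r) (h1 : ¬ cov H c1 r) (hr : r ∉ U)
    (hL : ∀ u ∈ U, ∀ v ∈ U, ∃ t, cov H u t ∧ cov H v t)
    (hA : nA H u0 r ∈ U) (hB : nB H u0 r ∈ U)
    (hp : hpin H U c0 c1 (nA H u0 r) (nB H u0 r)) :
    ((cmP H U u0 c0 c1 r).1 = nA H u0 r ∨ (cmP H U u0 c0 c1 r).1 = nB H u0 r ∨
     (cmP H U u0 c0 c1 r).2 = nA H u0 r ∨ (cmP H U u0 c0 c1 r).2 = nB H u0 r) ∧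
    (cov H (nA H u0 r) (cmP H U u0 c0 c1 r).1 ∨ cov H (nA H u0 r) (cmP H U u0 c0 c1 r).2) ∧
    (cov H (nB H u0 r) (cmP H U u0 c0 c1 r).1 ∨ cov H (nB H u0 r) (cmP H U u0 c0 c1 r).2) := by
  unfold cmP
  rw [if_neg h0, if_neg h1, if_neg hr]
  split_ifs with hs1 hs2 hs3 hs4
  · refine ⟨Or.inl (chase_at H U hs1.1), Or.inl ?_, Or.inr ?_⟩
    · rw [chase_at H U hs1.1]; exact cov_refl H _
    · rcases hs1.2 with h | h
      · exact chase_covT H U hL h hB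
      · rw [chase_at H U h]; exact cov_refl H _
  · refine ⟨Or.inr (Or.inl (chase_at H U hs2.1)), Or.inr ?_, Or.inl ?_⟩
    · rcases hs2.2 with h | h
      · exact chase_covT H U hL h hA
      · rw [chase_at H U h]; exact cov_refl H _
    · rw [chase_at H U hs2.1]; exact cov_refl H _
  · refine ⟨Or.inr (Or.inr (Or.inl (chase_at H U hs3.1))), Or.inr ?_, Or.inl ?_⟩
    · rw [chase_at H U hs3.1]; exact cov_refl H _
    · rcases hs3.2 with h | h
      · exact chase_covT H U hL h hB
      · rw [chase_at H U h]; exact cov_refl H _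
  · refine ⟨Or.inr (Or.inr (Or.inr (chase_at H U hs4.1))), Or.inl ?_, Or.inr ?_⟩
    · rcases hs4.2 with h | h
      · exact chase_covT H U hL h hA
      · rw [chase_at H U h]; exact cov_refl H _
    · rw [chase_at H U hs4.1]; exact cov_refl H _
  · exact absurd hp (by unfold hpin; tauto)

end CRAux
namespace CRAux

open scoped Classical

variable {W : Type*} (H : SimpleGraph W) (U : Set W) (u0 : W)

theorem core (hu0 : u0 ∈ U)
    (hVC : ∀ ⦃x y : W⦄, H.Adj x y → x ∈ U ∨ y ∈ U)
    (hL : ∀ u ∈ U, ∀ v ∈ U, ∃ t, cov H u t ∧ cov H v t)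
    (hM : ∀ p ∈ U, ∀ a b, H.Adj p a → H.Adj p b → a ∈ U → b ∈ U → a = b)
    (hD : ∀ x, x ∉ U → ∃ A B, nbrProp H x A B) :
    CopsWin H 2 := by
  classical
  set cm : (Fin 2 → W) → W → Fin 2 → W :=
    fun c r i => if i = 0 then (cmP H U u0 (c 0) (c 1) r).1
      else (cmP H U u0 (c 0) (c 1) r).2 with hcm
  refine ⟨⟨fun _ => u0, cm, ?_⟩, ?_⟩
  · intro c r i
    have h := cmP_valid H U u0 (c 0) (c 1) r
    by_cases hi : i = 0
    · subst hi
      simp only [hcm, if_pos rfl]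
      rcases h.1 with h' | h'
      · exact Or.inl h'.symm
      · exact Or.inr h'
    · have hi1 : i = 1 := by omega
      subst hi1
      simp only [hcm, if_neg (by decide : ¬ (1 : Fin 2) = 0)]
      rcases h.2 with h' | h'
      · exact Or.inl h'.symm
      · exact Or.inr h'
  · intro RS
    set s : ℕ → (Fin 2 → W) × W := gplay (fun _ => u0) cm RS.init RS.move with hsdef
    show ∃ n i, (s n).1 i = (s n).2 ∨ cm (s n).1 (s n).2 i = (s n).2
    set Df : ℕ → W × W := fun n => cmP H U u0 ((s n).1 0) ((s n).1 1) ((s n).2) with hDf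
    have hcm0 : ∀ n, cm (s n).1 (s n).2 0 = (Df n).1 := fun n => rfl
    have hcm1 : ∀ n, cm (s n).1 (s n).2 1 = (Df n).2 := fun n => by
      simp only [hcm, hDf, if_neg (by decide : ¬ (1 : Fin 2) = 0)]
    have hc0 : ∀ n, (s (n+1)).1 0 = (Df n).1 := fun n => rfl
    have hc1 : ∀ n, (s (n+1)).1 1 = (Df n).2 := fun n => by
      show cm (s n).1 (s n).2 1 = (Df n).2
      exact hcm1 n
    have hrv : ∀ n, (s (n+1)).2 = (s n).2 ∨ H.Adj ((s n).2) ((s (n+1)).2) :=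
      fun n => RS.valid _ _
    -- basic catching lemmas
    have L0 : ∀ n, (cov H ((s n).1 0) ((s n).2) ∨ cov H ((s n).1 1) ((s n).2)) →
        ∃ n i, (s n).1 i = (s n).2 ∨ cm (s n).1 (s n).2 i = (s n).2 := by
      intro n h
      rcases cmP_catch H U u0 h with h' | h'
      · exact ⟨n, 0, Or.inr ((hcm0 n).trans h')⟩
      · exact ⟨n, 1, Or.inr ((hcm1 n).trans h')⟩
    -- the pin lemma
    have LP : ∀ n, (s n).2 ∉ U →
        hpin H U ((s n).1 0) ((s n).1 1) (nA H u0 ((s n).2)) (nB H u0 ((s n).2)) →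
        ∃ n i, (s n).1 i = (s n).2 ∨ cm (s n).1 (s n).2 i = (s n).2 := by
      intro n hrU hp
      by_cases hcov : cov H ((s n).1 0) ((s n).2) ∨ cov H ((s n).1 1) ((s n).2)
      · exact L0 n hcov
      push_neg at hcov
      obtain ⟨hadjA, hadjB, hbnd⟩ := nbr_spec H u0 (hD _ hrU)
      have hA : nA H u0 ((s n).2) ∈ U := (hVC hadjA).resolve_left hrU
      have hB : nB H u0 ((s n).2) ∈ U := (hVC hadjB).resolve_left hrU
      obtain ⟨hat, hcA, hcB⟩ := cmP_pin H U u0 hcov.1 hcov.2 hrU hL hA hB hp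
      rcases hrv n with he | hadj
      · -- robber stays; some cop is at a true neighbour of r
        refine L0 (n+1) ?_
        rw [hc0 n, hc1 n, he]
        rcases hat with h | h | h | h
        · exact Or.inl (h ▸ Or.inr hadjA.symm)
        · exact Or.inl (h ▸ Or.inr hadjB.symm)
        · exact Or.inr (h ▸ Or.inr hadjA.symm)
        · exact Or.inr (h ▸ Or.inr hadjB.symm)
      · -- robber moves to A or B, both covered
        refine L0 (n+1) ?_
        rw [hc0 n, hc1 n]
        rcases hbnd _ hadj with h | h
        · rw [h]
          rcases hcA with h' | h'
          · exact Or.inl (cov_symm H h')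
          · exact Or.inr (cov_symm H h')
        · rw [h]
          rcases hcB with h' | h'
          · exact Or.inl (cov_symm H h')
          · exact Or.inr (cov_symm H h')
    -- the main chase lemma: robber on U, both cops on U
    have LD : ∀ n, (s n).2 ∈ U → (s n).1 0 ∈ U → (s n).1 1 ∈ U →
        ∃ n i, (s n).1 i = (s n).2 ∨ cm (s n).1 (s n).2 i = (s n).2 := by
      intro n hrU h00 h11
      by_cases hcov : cov H ((s n).1 0) ((s n).2) ∨ cov H ((s n).1 1) ((s n).2)
      · exact L0 n hcov
      push_neg at hcov
      obtain ⟨h0, h1⟩ := hcov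
      have hDn : Df n = ((s n).1 0, tow H ((s n).1 1) ((s n).2)) :=
        cmP_UU H U u0 h0 h1 hrU h00 h11
      have hXr : cov H ((s n).2) (tow H ((s n).1 1) ((s n).2)) :=
        tow_cov_right H (hL _ h11 _ hrU)
      rcases hrv n with he | hadj
      · refine L0 (n+1) (Or.inr ?_)
        rw [hc1 n, hDn, he]
        exact cov_symm H hXr
      · by_cases hcov1 : cov H ((s (n+1)).1 0) ((s (n+1)).2) ∨
            cov H ((s (n+1)).1 1) ((s (n+1)).2)
        · exact L0 (n+1) hcov1
        push_neg at hcov1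
        obtain ⟨h0', h1'⟩ := hcov1
        have e0 : (s (n+1)).1 0 = (s n).1 0 := by rw [hc0 n, hDn]
        have e1 : (s (n+1)).1 1 = tow H ((s n).1 1) ((s n).2) := by rw [hc1 n, hDn]
        have h0U : (s (n+1)).1 0 ∈ U := by rw [e0]; exact h00
        by_cases hpU : (s (n+1)).2 ∈ U
        · -- robber hopped to its unique U-neighbour p
          have hXne : tow H ((s n).1 1) ((s n).2) ≠ (s n).2 := by
            intro h
            exact h1 (h ▸ tow_cov_left H ((s n).1 1) ((s n).2))
          have hXadj : H.Adj ((s n).2) (tow H ((s n).1 1) ((s n).2)) :=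
            hXr.resolve_left (fun h => hXne h.symm)
          have hXU : tow H ((s n).1 1) ((s n).2) ∉ U := by
            intro hXU'
            apply h1'
            rw [e1]
            have hxp : tow H ((s n).1 1) ((s n).2) = (s (n+1)).2 :=
              hM _ hrU _ _ hXadj hadj hXU' hpU
            exact hxp ▸ cov_refl H _
          have hD1 : Df (n+1) = (tow H ((s (n+1)).1 0) ((s (n+1)).2),
              smart H U ((s (n+1)).1 1) ((s (n+1)).2)) :=
            cmP_UI H U u0 h0' h1' hpU h0U (by rw [e1]; exact hXU)
          have hsm := smart_spec H U (x := (s (n+1)).1 1) (r := (s (n+1)).2)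
            ⟨(s n).2, hrU, by rw [e1]; exact hXadj.symm, Or.inr hadj⟩
          by_cases hsp : smart H U ((s (n+1)).1 1) ((s (n+1)).2) = (s (n+1)).2
          · exact ⟨n+1, 1, Or.inr (by rw [hcm1 (n+1), hD1]; exact hsp)⟩
          · have hsadj : H.Adj (smart H U ((s (n+1)).1 1) ((s (n+1)).2)) ((s (n+1)).2) :=
              hsm.2.2.resolve_left hsp
            have hsr : smart H U ((s (n+1)).1 1) ((s (n+1)).2) = (s n).2 :=
              hM _ hpU _ _ hsadj.symm hadj.symm hsm.1 hrU
            have f1 : (s (n+2)).1 1 = (s n).2 := by rw [hc1 (n+1), hD1]; exact hsr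
            have f0cov : cov H ((s (n+1)).2) ((s (n+2)).1 0) := by
              rw [hc0 (n+1), hD1]
              exact tow_cov_right H (hL _ h0U _ hpU)
            rcases hrv (n+1) with he2 | hadj2
            · refine L0 (n+2) (Or.inr ?_)
              rw [f1, he2]
              exact Or.inr hadj
            · by_cases hr2U : (s (n+2)).2 ∈ U
              · have hrr : (s (n+2)).2 = (s n).2 :=
                  hM _ hpU _ _ hadj2 hadj.symm hr2U hrU
                exact ⟨n+2, 1, Or.inl (by rw [f1, hrr])⟩
              · apply LP (n+2) hr2U
                obtain ⟨hadjA2, hadjB2, hbnd2⟩ := nbr_spec H u0 (hD _ hr2U)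
                rcases hbnd2 _ hadj2.symm with hpA | hpB
                · exact Or.inl ⟨hpA ▸ cov_symm H f0cov, Or.inl (by rw [f1]; exact hrU)⟩
                · exact Or.inr (Or.inl ⟨hpB ▸ cov_symm H f0cov,
                    Or.inl (by rw [f1]; exact hrU)⟩)
        · -- robber moved to an I vertex
          apply LP (n+1) hpU
          obtain ⟨hadjA1, hadjB1, hbnd1⟩ := nbr_spec H u0 (hD _ hpU)
          have hcovX : cov H ((s (n+1)).1 1) ((s n).2) := by
            rw [e1]; exact cov_symm H hXr
          rcases hbnd1 _ hadj.symm with hrA | hrB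
          · exact Or.inr (Or.inr (Or.inl ⟨hrA ▸ hcovX, Or.inl h0U⟩))
          · exact Or.inr (Or.inr (Or.inr ⟨hrB ▸ hcovX, Or.inl h0U⟩))
    -- initial analysis
    by_cases h00 : cov H u0 ((s 0).2)
    · exact L0 0 (Or.inl h00)
    by_cases hr0 : (s 0).2 ∈ U
    · exact LD 0 hr0 hu0 hu0
    obtain ⟨hadjA, hadjB, hbnd⟩ := nbr_spec H u0 (hD _ hr0)
    have hA : nA H u0 ((s 0).2) ∈ U := (hVC hadjA).resolve_left hr0
    have hB : nB H u0 ((s 0).2) ∈ U := (hVC hadjB).resolve_left hr0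
    obtain ⟨X, Y, hXY, hsh⟩ := cmP_I_shape H U u0 h00 h00 hr0
      (c0 := (s 0).1 0) (c1 := (s 0).1 1)
    have hdf : Df 0 = (chase H U ((s 0).1 0) X, chase H U ((s 0).1 1) Y) := hsh
    have hu00 : (s 0).1 0 ∈ U := hu0
    have hu01 : (s 0).1 1 ∈ U := hu0
    rcases hXY with ⟨hXA, hYB⟩ | ⟨hXB, hYA⟩
    · have hXU : X ∈ U := hXA ▸ hA
      have hYU : Y ∈ U := hYB ▸ hB
      have cA : cov H X (Df 0).1 := by rw [hdf]; exact chase_covT H U hL hu00 hXU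
      have cB : cov H Y (Df 0).2 := by rw [hdf]; exact chase_covT H U hL hu01 hYU
      rcases hrv 0 with he | hadj
      · apply LP 1 (by rw [he]; exact hr0)
        rw [hc0 0, hc1 0, he]
        exact Or.inl ⟨cov_symm H (hXA ▸ cA), Or.inr (cov_symm H (hYB ▸ cB))⟩
      · refine L0 1 ?_
        rw [hc0 0, hc1 0]
        rcases hbnd _ hadj with h | h
        · rw [h, ← hXA]
          exact Or.inl (cov_symm H cA)
        · rw [h, ← hYB]
          exact Or.inr (cov_symm H cB)
    · have hXU : X ∈ U := hXB ▸ hB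
      have hYU : Y ∈ U := hYA ▸ hA
      have cA : cov H X (Df 0).1 := by rw [hdf]; exact chase_covT H U hL hu00 hXU
      have cB : cov H Y (Df 0).2 := by rw [hdf]; exact chase_covT H U hL hu01 hYU
      rcases hrv 0 with he | hadj
      · apply LP 1 (by rw [he]; exact hr0)
        rw [hc0 0, hc1 0, he]
        exact Or.inr (Or.inl ⟨cov_symm H (hXB ▸ cA), Or.inr (cov_symm H (hYA ▸ cB))⟩)
      · refine L0 1 ?_
        rw [hc0 0, hc1 0]
        rcases hbnd _ hadj with h | h
        · rw [h, ← hYA]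
          exact Or.inr (cov_symm H cB)
        · rw [h, ← hXB]
          exact Or.inl (cov_symm H cA)

end CRAux
namespace CRAux

lemma pair_lemma {α : Type*} {S : Set α} (hfin : S.Finite) (h : S.ncard ≤ 2)
    {z : α} (hz : z ∈ S) :
    ∃ A B, A ∈ S ∧ B ∈ S ∧ ∀ y ∈ S, y = A ∨ y = B := by
  by_cases h1 : ∃ y ∈ S, y ≠ z
  · obtain ⟨y, hy, hyz⟩ := h1
    refine ⟨z, y, hz, hy, ?_⟩
    intro w hw
    by_contra hc
    push_neg at hc
    have hsub : ({z, y, w} : Set α) ⊆ S := by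
      intro a ha
      rcases ha with rfl | rfl | rfl
      · exact hz
      · exact hy
      · exact hw
    have h3 : ({z, y, w} : Set α).ncard = 3 :=
      Set.ncard_eq_three.mpr ⟨z, y, w, fun he => hyz he.symm, fun he => hc.1 he.symm,
        fun he => hc.2 he.symm, rfl⟩
    have hle := Set.ncard_le_ncard hsub hfin
    omega
  · push_neg at h1
    exact ⟨z, z, hz, hz, fun y hy => Or.inl (h1 y hy)⟩

lemma link {V : Type*} [Fintype V] (G : SimpleGraph V) (U : Set V)
    (hVC : ∀ ⦃x y : V⦄, G.Adj x y → x ∈ U ∨ y ∈ U)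
    (h3 : ∀ (a b : V) (p : G.Walk a b), p.IsPath → p.length = G.dist a b →
      {x | x ∈ p.support ∧ x ∈ U}.ncard ≤ 2)
    {u v : V} (hu : u ∈ U) (hv : v ∈ U) (hr : G.Reachable u v) :
    ∃ t, (u = t ∨ G.Adj u t) ∧ (v = t ∨ G.Adj v t) := by
  classical
  obtain ⟨w, hw⟩ := hr.exists_walk_length_eq_dist
  have hex : ∃ p : G.Walk u v, p.IsPath ∧ p.length = G.dist u v :=
    ⟨w.bypass, SimpleGraph.Walk.bypass_isPath w,
      le_antisymm (le_trans (SimpleGraph.Walk.length_bypass_le w) (le_of_eq hw))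
        (SimpleGraph.dist_le _)⟩
  obtain ⟨p, hp, hlen⟩ := hex
  cases p with
  | nil => exact ⟨u, Or.inl rfl, Or.inl rfl⟩
  | @cons _ x1 _ hadj q =>
    cases q with
    | nil => exact ⟨v, Or.inr hadj, Or.inl rfl⟩
    | @cons _ x2 _ hadj2 q2 =>
      cases q2 with
      | nil => exact ⟨_, Or.inr hadj, Or.inr hadj2.symm⟩
      | @cons _ x3 _ hadj3 q3 =>
        exfalso
        set p := SimpleGraph.Walk.cons hadj (SimpleGraph.Walk.cons hadj2
          (SimpleGraph.Walk.cons hadj3 q3)) with hpdef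
        have hsup : p.support = u :: x1 :: x2 :: q3.support := by
          simp [hpdef, SimpleGraph.Walk.support_cons]
        have hnd := hp.support_nodup
        rw [hsup] at hnd
        simp only [List.nodup_cons, List.mem_cons] at hnd
        have hvq : v ∈ q3.support := SimpleGraph.Walk.end_mem_support q3
        have hcard := h3 u v p hp hlen
        -- z: a U-vertex among the two middle vertices
        obtain ⟨z, hzU, hzsup, hzu, hzv⟩ :
            ∃ z, z ∈ U ∧ z ∈ p.support ∧ z ≠ u ∧ z ≠ v := by
          rcases hVC hadj2 with h | h
          · refine ⟨_, h, by rw [hsup]; simp, ?_, ?_⟩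
            · intro he; exact hnd.1 (Or.inl he.symm)
            · intro he; exact hnd.2.1 (Or.inr (he ▸ hvq))
          · refine ⟨_, h, by rw [hsup]; simp, ?_, ?_⟩
            · intro he; exact hnd.1 (Or.inr (Or.inl he.symm))
            · intro he; exact hnd.2.2.1 (he ▸ hvq)
        have huv : u ≠ v := by
          intro he; exact hnd.1 (Or.inr (Or.inr (he ▸ hvq)))
        have hsub : ({u, z, v} : Set V) ⊆ {x | x ∈ p.support ∧ x ∈ U} := by
          intro a ha
          rcases ha with rfl | rfl | rfl
          · exact ⟨by rw [hsup]; simp, hu⟩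
          · exact ⟨hzsup, hzU⟩
          · exact ⟨by rw [hsup]; simp [hvq], hv⟩
        have h3c : ({u, z, v} : Set V).ncard = 3 :=
          Set.ncard_eq_three.mpr ⟨u, z, v, fun he => hzu he.symm, huv, hzv, rfl⟩
        have hle := Set.ncard_le_ncard hsub (Set.toFinite _)
        omega

end CRAux
namespace CRAux

lemma matching {V : Type*} [Fintype V] (G : SimpleGraph V) (U : Set V)
    (h2 : ∀ v ∈ U, ((insert v (G.neighborSet v)) ∩ U).ncard ≤ 2)
    {p a b : V} (hp : p ∈ U) (ha : a ∈ U) (hb : b ∈ U)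
    (hpa : G.Adj p a) (hpb : G.Adj p b) : a = b := by
  by_contra hne
  have hsub : ({p, a, b} : Set V) ⊆ (insert p (G.neighborSet p)) ∩ U := by
    intro x hx
    rcases hx with rfl | rfl | rfl
    · exact ⟨Set.mem_insert _ _, hp⟩
    · exact ⟨Set.mem_insert_of_mem _ hpa, ha⟩
    · exact ⟨Set.mem_insert_of_mem _ hpb, hb⟩
  have h3c : ({p, a, b} : Set V).ncard = 3 :=
    Set.ncard_eq_three.mpr ⟨p, a, b, (G.ne_of_adj hpa), (G.ne_of_adj hpb), hne, rfl⟩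
  have hle := Set.ncard_le_ncard hsub (Set.toFinite _)
  have := h2 p hp
  omega

lemma walk_nbr {V : Type*} (G : SimpleGraph V) {a b : V} (w : G.Walk a b) :
    a = b ∨ ∃ z, G.Adj a z := by
  cases w with
  | nil => exact Or.inl rfl
  | cons hadj q => exact Or.inr ⟨_, hadj⟩

end CRAux

/-- Under the structural hypotheses (vertex cover `U` with independent complement `I`,
every vertex of `I` has at most 2 neighbours, every `u ∈ U` has `|N[u] ∩ U| ≤ 2`, and every
isometric path contains at most 2 vertices of `U`), every connected component of `G`
has cop number at most 2. -/
theorem copNumber_component_le_two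
    {V : Type*} [Fintype V] (G : SimpleGraph V)
    (U I : Set V) (hI : I = Uᶜ)
    (hVC : ∀ ⦃x y : V⦄, G.Adj x y → x ∈ U ∨ y ∈ U)
    (h1 : ∀ v ∈ I, (G.neighborSet v).ncard ≤ 2)
    (h2 : ∀ v ∈ U, ((insert v (G.neighborSet v)) ∩ U).ncard ≤ 2)
    (h3 : ∀ (a b : V) (p : G.Walk a b), p.IsPath → p.length = G.dist a b →
      {x | x ∈ p.support ∧ x ∈ U}.ncard ≤ 2) :
    ∀ c : G.ConnectedComponent, copNumber (G.induce c.supp) ≤ 2 := by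
  intro c
  classical
  have hsuppmem : ∀ {x y : V}, x ∈ c.supp → G.Adj x y → y ∈ c.supp := by
    intro x y hx hxy
    rw [SimpleGraph.ConnectedComponent.mem_supp_iff] at hx ⊢
    rw [← hx]
    exact (SimpleGraph.ConnectedComponent.sound hxy.symm.reachable)
  have hreach : ∀ x y : c.supp, G.Reachable (x : V) (y : V) := by
    intro x y
    apply SimpleGraph.ConnectedComponent.exact
    rw [(SimpleGraph.ConnectedComponent.mem_supp_iff c _).mp x.2,
      (SimpleGraph.ConnectedComponent.mem_supp_iff c _).mp y.2]
  by_cases hUc : ∃ u0 : c.supp, (u0 : V) ∈ U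
  · obtain ⟨u0, hu0⟩ := hUc
    have hwin : CopsWin (G.induce c.supp) 2 := by
      apply CRAux.core (G.induce c.supp) {x : c.supp | (x : V) ∈ U} u0 hu0
      · -- vertex cover
        intro x y hxy
        exact hVC hxy
      · -- link property
        intro x hx y hy
        obtain ⟨t, htx, hty⟩ := CRAux.link G U hVC h3 hx hy (hreach x y)
        have htc : t ∈ c.supp := by
          rcases htx with h | h
          · exact h ▸ x.2
          · exact hsuppmem x.2 h
        refine ⟨⟨t, htc⟩, ?_, ?_⟩
        · rcases htx with h | h
          · exact Or.inl (Subtype.ext h)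
          · exact Or.inr h
        · rcases hty with h | h
          · exact Or.inl (Subtype.ext h)
          · exact Or.inr h
      · -- matching
        intro p hp a b hpa hpb ha hb
        exact Subtype.ext (CRAux.matching G U h2 hp ha hb hpa hpb)
      · -- at most two neighbours
        intro x hx
        have hxU : (x : V) ∉ U := hx
        have hxI : (x : V) ∈ I := by rw [hI]; exact hxU
        have hz0 : ∃ z, G.Adj (x : V) z := by
          obtain ⟨w⟩ := hreach x u0
          rcases CRAux.walk_nbr G w with h | h
          · exact absurd (h ▸ hu0) hxU
          · exact h
        obtain ⟨z0, hz0⟩ := hz0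
        obtain ⟨A, B, hA, hB, hbnd⟩ :=
          CRAux.pair_lemma (Set.toFinite _) (h1 _ hxI) hz0
        refine ⟨⟨A, hsuppmem x.2 hA⟩, ⟨B, hsuppmem x.2 hB⟩, hA, hB, ?_⟩
        intro z hz
        rcases hbnd (z : V) hz with h | h
        · exact Or.inl (Subtype.ext h)
        · exact Or.inr (Subtype.ext h)
    exact Nat.sInf_le hwin
  · -- the component has no vertex of the cover: it is a single vertex
    push_neg at hUc
    have hsing : ∀ x y : c.supp, x = y := by
      intro x y
      obtain ⟨w⟩ := hreach x y
      apply Subtype.ext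
      rcases CRAux.walk_nbr G w with h | h
      · exact h
      · exfalso
        obtain ⟨z, hadj⟩ := h
        rcases hVC hadj with h | h
        · exact hUc x h
        · exact hUc ⟨z, hsuppmem x.2 hadj⟩ h
    have v0 : c.supp := ⟨c.out, by
      rw [SimpleGraph.ConnectedComponent.mem_supp_iff]; exact c.out_eq⟩
    refine Nat.sInf_le (⟨⟨fun _ => v0, fun cc r i => cc i, fun _ _ _ => Or.inl rfl⟩, ?_⟩)
    intro RS
    exact ⟨0, 0, Or.inl (hsing _ _)⟩
end

section
/- Let X be a finite set of cardinality N ≥ 1, and let Y be a family of subsets of X that is an antichain (for all distinct A, B ∈ Y, neither A ⊆ B nor B ⊆ A). Then |Y| ≤ 2^N / √N. -/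
/-!
By Sperner's theorem an antichain has at most `C(N, ⌊N/2⌋)` members. For the estimate
`N · C(N, ⌊N/2⌋)² ≤ 4^N`, the recursion `(n + 1) C(2n+2, n+1) = 2 (2n + 1) C(2n, n)` shows by
induction that `(2n + 1) C(2n, n)² ≤ 16^n`; odd `N = 2m + 1` reduces to this via
`C(2m+2, m+1) = 2 C(2m+1, m)`.
-/

namespace Nat

theorem two_mul_add_one_mul_centralBinom_sq_le (n : ℕ) :
    (2 * n + 1) * n.centralBinom ^ 2 ≤ 16 ^ n := by
  induction n with
  | zero => simp
  | succ n ih =>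
    have hrec := succ_mul_centralBinom_succ n
    refine le_of_mul_le_mul_left ?_ (show 0 < (n + 1) ^ 2 by positivity)
    calc (n + 1) ^ 2 * ((2 * (n + 1) + 1) * (n + 1).centralBinom ^ 2)
        = (2 * n + 3) * ((n + 1) * (n + 1).centralBinom) ^ 2 := by ring
      _ = 4 * (2 * n + 1) * (2 * n + 3) * ((2 * n + 1) * n.centralBinom ^ 2) := by
          rw [hrec]; ring
      _ ≤ 4 * (2 * n + 1) * (2 * n + 3) * 16 ^ n := by gcongr
      _ ≤ 16 * (n + 1) ^ 2 * 16 ^ n := Nat.mul_le_mul_right _ (by nlinarith)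
      _ = (n + 1) ^ 2 * 16 ^ (n + 1) := by ring

theorem centralBinom_succ_eq_two_mul_choose (m : ℕ) :
    (m + 1).centralBinom = 2 * (2 * m + 1).choose m := by
  rw [centralBinom_eq_two_mul_choose, show 2 * (m + 1) = 2 * m + 1 + 1 by ring,
    choose_succ_succ, choose_symm_half]
  ring

theorem mul_choose_half_sq_le_four_pow (n : ℕ) : n * n.choose (n / 2) ^ 2 ≤ 4 ^ n := by
  obtain ⟨m, rfl | rfl⟩ := even_or_odd' n
  · rw [mul_div_cancel_left₀ m two_ne_zero, ← centralBinom_eq_two_mul_choose, pow_mul]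
    calc 2 * m * m.centralBinom ^ 2 ≤ (2 * m + 1) * m.centralBinom ^ 2 := by gcongr; omega
      _ ≤ (4 ^ 2) ^ m := two_mul_add_one_mul_centralBinom_sq_le m
  · have hhalf : (2 * m + 1) / 2 = m := by omega
    have hsucc := two_mul_add_one_mul_centralBinom_sq_le (m + 1)
    rw [centralBinom_succ_eq_two_mul_choose] at hsucc
    rw [hhalf]
    refine le_of_mul_le_mul_left ?_ (show 0 < 4 by norm_num)
    calc 4 * ((2 * m + 1) * (2 * m + 1).choose m ^ 2)
        ≤ (2 * (m + 1) + 1) * (2 * (2 * m + 1).choose m) ^ 2 := by ring_nf; omega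
      _ ≤ 16 ^ (m + 1) := hsucc
      _ = 4 * 4 ^ (2 * m + 1) := by rw [pow_succ, pow_succ, pow_mul]; ring

theorem choose_half_le_two_pow_div_sqrt {n : ℕ} (hn : n ≠ 0) :
    (n.choose (n / 2) : ℝ) ≤ 2 ^ n / Real.sqrt n := by
  have hsqrt : 0 < Real.sqrt n := Real.sqrt_pos.mpr (by positivity)
  rw [le_div_iff₀ hsqrt]
  refine le_of_pow_le_pow_left₀ two_ne_zero (by positivity) ?_
  calc ((n.choose (n / 2) : ℝ) * Real.sqrt n) ^ 2 = ((n * n.choose (n / 2) ^ 2 : ℕ) : ℝ) := by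
        rw [mul_pow, Real.sq_sqrt n.cast_nonneg]; push_cast; ring
    _ ≤ ((4 ^ n : ℕ) : ℝ) := by exact_mod_cast mul_choose_half_sq_le_four_pow n
    _ = (2 ^ n) ^ 2 := by rw [← pow_mul, mul_comm, pow_mul]; norm_num

end Nat

/-- Sperner-type bound: an antichain of subsets of an `N`-element set (`N ≥ 1`) has
at most `2^N / √N` members. -/
theorem antichain_card_le_two_pow_div_sqrt
    {X : Type*} [Fintype X] (N : ℕ) (hN : 1 ≤ N) (hX : Fintype.card X = N)
    (Y : Finset (Finset X))
    (hY : IsAntichain (· ⊆ ·) (↑Y : Set (Finset X))) :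
    (Y.card : ℝ) ≤ 2 ^ N / Real.sqrt N := by
  classical
  have hsperner : Y.card ≤ N.choose (N / 2) := hX ▸ hY.sperner
  calc (Y.card : ℝ) ≤ N.choose (N / 2) := by exact_mod_cast hsperner
    _ ≤ 2 ^ N / Real.sqrt N := Nat.choose_half_le_two_pow_div_sqrt (by omega)
end

section
/- Let G be a connected graph, u and v vertices in the same clique C of G − U (where U is a cluster vertex deletion set), such that N_U(u) ⊆ N_U(v). Then N[u] ⊆ N[v], and consequently c(G) = c(G \ {u}). -/
/-!
If `N[u] ⊆ N[v]` with `u ≠ v`, the map `ψ : G → G - u` sending `u` to `v` and fixing every other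
vertex sends moves to moves. Cops playing in `G` are shadowed by cops playing `ψ` of their
positions in `G - u`, so a win in `G` gives a win in `G - u`. Conversely, cops in `G` play their
`G - u` strategy against the shadow `ψ(r)` of the robber; when they catch the shadow while the
robber sits on `u`, the capturing cop is on `v`, and one more move catches the robber because
`N[u] ⊆ N[v]`. In `G - U` the clique containing `u` and `v` gives `N[u] \ U ⊆ N[v]`, and
`N_U(u) ⊆ N_U(v)` covers the rest.

To compare strategies we replace the game by the inductive predicate "from this position the
cops can force a capture"; on a finite graph the well-founded rank of that predicate turns it
into a positional strategy.
-/

open SimpleGraph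

variable {V : Type*}

/-- A graph is a disjoint union of cliques. -/
def IsClusterGraph {W : Type*} (H : SimpleGraph W) : Prop :=
  ∀ ⦃x y z : W⦄, H.Adj x y → H.Adj y z → x = z ∨ H.Adj x z

section CopsCanCapture

variable {W : Type*} (H : SimpleGraph W) {k : ℕ}

def CopMove (c d : Fin k → W) : Prop :=
  ∀ i, d i = c i ∨ H.Adj (c i) (d i)

def RobberMove (r r' : W) : Prop := r' = r ∨ H.Adj r r'

inductive CopsCanCapture : (Fin k → W) → W → Prop where
  | capture {c r} (d : Fin k → W) : CopMove H c d → (∃ i, d i = r) → CopsCanCapture c r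
  | step {c r} (d : Fin k → W) : CopMove H c d →
      (∀ r', RobberMove H r r' → CopsCanCapture d r') → CopsCanCapture c r

def CopsCaptureWithin : ℕ → (Fin k → W) → W → Prop
  | 0, _, _ => False
  | n + 1, c, r => ∃ d, CopMove H c d ∧
      ((∃ i, d i = r) ∨ ∀ r', RobberMove H r r' → CopsCaptureWithin n d r')

noncomputable def captureRank (c : Fin k → W) (r : W) : ℕ := sInf {n | CopsCaptureWithin H n c r}

open Classical in
/-- The positional cop strategy that moves to a position of smaller `captureRank`. -/
noncomputable def rankMove (c : Fin k → W) (r : W) : Fin k → W :=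
  if h : ∃ d, CopMove H c d ∧ ((∃ i, d i = r) ∨
      ∀ r', RobberMove H r r' → CopsCaptureWithin H (captureRank H c r - 1) d r')
  then h.choose else c

variable {H}

theorem CopsCaptureWithin.succ {n : ℕ} {c : Fin k → W} {r : W}
    (h : CopsCaptureWithin H n c r) : CopsCaptureWithin H (n + 1) c r := by
  induction n generalizing c r with
  | zero => exact h.elim
  | succ n ih =>
    obtain ⟨d, hd, h⟩ := h
    exact ⟨d, hd, h.imp id fun h r' hr' => ih (h r' hr')⟩

theorem CopsCaptureWithin.mono {n m : ℕ} (hnm : n ≤ m) {c : Fin k → W} {r : W}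
    (h : CopsCaptureWithin H n c r) : CopsCaptureWithin H m c r := by
  induction m, hnm using Nat.le_induction with
  | base => exact h
  | succ m _ ih => exact ih.succ

theorem CopsCanCapture.exists_copsCaptureWithin [Finite W] {c : Fin k → W} {r : W}
    (h : CopsCanCapture H c r) : ∃ n, CopsCaptureWithin H n c r := by
  induction h with
  | capture d hd hcap => exact ⟨1, d, hd, Or.inl hcap⟩
  | @step c r d hd _ ih =>
    choose! N hN using ih
    -- `W` is finite, so one bound serves every robber reply
    obtain ⟨M, hM⟩ := (Set.finite_range N).bddAbove
    exact ⟨M + 1, d, hd, Or.inr fun r' hr' => (hN r' hr').mono (hM ⟨r', rfl⟩)⟩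

theorem copMove_rankMove (c : Fin k → W) (r : W) : CopMove H c (rankMove H c r) := by
  unfold rankMove
  split_ifs with h
  · exact h.choose_spec.1
  · exact fun _ => Or.inl rfl

theorem CopsCaptureWithin.rankMove_spec {n : ℕ} {c : Fin k → W} {r : W}
    (h : CopsCaptureWithin H n c r) :
    captureRank H c r - 1 < n ∧ ((∃ i, rankMove H c r i = r) ∨
      ∀ r', RobberMove H r r' →
        CopsCaptureWithin H (captureRank H c r - 1) (rankMove H c r) r') := by
  have hrank : CopsCaptureWithin H (captureRank H c r) c r :=
    Nat.sInf_mem (⟨n, h⟩ : {n | CopsCaptureWithin H n c r}.Nonempty)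
  obtain ⟨m, hm⟩ : ∃ m, captureRank H c r = m + 1 :=
    Nat.exists_eq_succ_of_ne_zero fun h0 => by rw [h0] at hrank; exact hrank
  have hle : captureRank H c r ≤ n := Nat.sInf_le h
  have hex : ∃ d, CopMove H c d ∧ ((∃ i, d i = r) ∨
      ∀ r', RobberMove H r r' → CopsCaptureWithin H (captureRank H c r - 1) d r') := by
    rw [hm] at hrank ⊢; exact hrank
  refine ⟨by omega, ?_⟩
  unfold rankMove
  rw [dif_pos hex]
  exact hex.choose_spec.2

theorem gCaught_rankMove_of_copsCaptureWithin (c₀ : Fin k → W) (RS : RobStrat H k) :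
    ∀ (m t : ℕ), CopsCaptureWithin H m
      (gplay c₀ (rankMove H) RS.init RS.move t).1
      (gplay c₀ (rankMove H) RS.init RS.move t).2 →
    gCaught c₀ (rankMove H) RS.init RS.move := by
  intro m
  induction m using Nat.strong_induction_on with
  | _ m ih =>
    intro t h
    obtain ⟨hlt, ⟨i, hi⟩ | hall⟩ := h.rankMove_spec
    · exact ⟨t, i, Or.inr hi⟩
    · exact ih _ hlt (t + 1) (hall _ (RS.valid _ _))

theorem copsWin_of_forall_copsCanCapture [Finite W] (c₀ : Fin k → W)
    (h : ∀ r, CopsCanCapture H c₀ r) : CopsWin H k := by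
  refine ⟨⟨c₀, rankMove H, copMove_rankMove⟩, fun RS => ?_⟩
  obtain ⟨m, hm⟩ := (h (RS.init c₀)).exists_copsCaptureWithin
  exact gCaught_rankMove_of_copsCaptureWithin c₀ RS m 0 hm

theorem CopsWin.exists_forall_copsCanCapture (h : CopsWin H k) :
    ∃ c₀ : Fin k → W, ∀ r, CopsCanCapture H c₀ r := by
  classical
  by_contra! hno
  obtain ⟨CS, hCS⟩ := h
  let escape (c : Fin k → W) (r : W) : W :=
    if hex : ∃ r', RobberMove H r r' ∧ ¬ CopsCanCapture H c r' then hex.choose else r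
  have escape_valid (c : Fin k → W) (r : W) : escape c r = r ∨ H.Adj r (escape c r) := by
    simp only [escape]
    split_ifs with hex
    · exact hex.choose_spec.1
    · exact Or.inl rfl
  let RS : RobStrat H k := ⟨fun c => (hno c).choose, escape, escape_valid⟩
  have hsafe : ∀ t, ¬ CopsCanCapture H (gplay CS.init CS.move RS.init RS.move t).1
      (gplay CS.init CS.move RS.init RS.move t).2 := by
    intro t
    induction t with
    | zero => exact (hno CS.init).choose_spec
    | succ t ih =>
      have hex : ∃ r', RobberMove H (gplay CS.init CS.move RS.init RS.move t).2 r' ∧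
          ¬ CopsCanCapture H (CS.move (gplay CS.init CS.move RS.init RS.move t).1
            (gplay CS.init CS.move RS.init RS.move t).2) r' := by
        by_contra! hne
        exact ih (.step _ (CS.valid _ _) hne)
      show ¬ CopsCanCapture H _ (escape _ _)
      simp only [escape, dif_pos hex]
      exact hex.choose_spec.2
  obtain ⟨t, i, hcap | hcap⟩ := hCS RS
  · exact hsafe t (.capture _ (fun _ => Or.inl rfl) ⟨i, hcap⟩)
  · exact hsafe t (.capture _ (CS.valid _ _) ⟨i, hcap⟩)

theorem copsWin_iff_exists_forall_copsCanCapture [Finite W] :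
    CopsWin H k ↔ ∃ c₀ : Fin k → W, ∀ r, CopsCanCapture H c₀ r :=
  ⟨CopsWin.exists_forall_copsCanCapture, fun ⟨c₀, h⟩ => copsWin_of_forall_copsCanCapture c₀ h⟩

end CopsCanCapture

section Corner

variable {G : SimpleGraph V} {u v : V}

open Classical in
noncomputable def cornerRetract (huv : u ≠ v) (w : V) : ({u}ᶜ : Set V) :=
  if h : w = u then ⟨v, huv.symm⟩ else ⟨w, h⟩

theorem cornerRetract_of_ne (huv : u ≠ v) {w : V} (hw : w ≠ u) :
    (cornerRetract huv w : V) = w := by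
  simp [cornerRetract, hw]

theorem cornerRetract_self (huv : u ≠ v) : (cornerRetract huv u : V) = v := by
  simp [cornerRetract]

theorem cornerRetract_coe (huv : u ≠ v) (x : ({u}ᶜ : Set V)) : cornerRetract huv x = x :=
  Subtype.ext (cornerRetract_of_ne huv x.2)

theorem RobberMove.map_cornerRetract (huv : u ≠ v)
    (hdom : insert u (G.neighborSet u) ⊆ insert v (G.neighborSet v)) {a b : V}
    (hab : RobberMove G a b) :
    RobberMove (G.induce ({u}ᶜ : Set V)) (cornerRetract huv a) (cornerRetract huv b) := by
  rcases hab with rfl | hab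
  · exact Or.inl rfl
  have to_v {w : V} (hw : G.Adj u w) : w = v ∨ G.Adj v w := hdom (Set.mem_insert_of_mem u hw)
  by_cases ha : a = u
  · subst ha
    have hb : b ≠ a := hab.ne'
    simp only [RobberMove, Subtype.ext_iff, induce_adj, cornerRetract_self,
      cornerRetract_of_ne huv hb]
    exact to_v hab
  by_cases hb : b = u
  · subst hb
    simp only [RobberMove, Subtype.ext_iff, induce_adj, cornerRetract_self,
      cornerRetract_of_ne huv ha]
    exact (to_v hab.symm).imp Eq.symm Adj.symm
  · simp only [RobberMove, Subtype.ext_iff, induce_adj, cornerRetract_of_ne huv ha,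
      cornerRetract_of_ne huv hb]
    exact Or.inr hab

theorem CopMove.map_cornerRetract (huv : u ≠ v)
    (hdom : insert u (G.neighborSet u) ⊆ insert v (G.neighborSet v)) {k : ℕ}
    {c d : Fin k → V} (h : CopMove G c d) :
    CopMove (G.induce ({u}ᶜ : Set V)) (cornerRetract huv ∘ c) (cornerRetract huv ∘ d) :=
  fun i => RobberMove.map_cornerRetract huv hdom (h i)

theorem CopMove.coe_induce {s : Set V} {k : ℕ} {c d : Fin k → s}
    (h : CopMove (G.induce s) c d) : CopMove G (Subtype.val ∘ c) (Subtype.val ∘ d) :=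
  fun i => (h i).imp (congrArg Subtype.val) id

theorem CopsCanCapture.map_cornerRetract (huv : u ≠ v)
    (hdom : insert u (G.neighborSet u) ⊆ insert v (G.neighborSet v)) {k : ℕ}
    {c : Fin k → V} {r : V} (h : CopsCanCapture G c r) (r' : ({u}ᶜ : Set V))
    (hr : (r' : V) = r) :
    CopsCanCapture (G.induce ({u}ᶜ : Set V)) (cornerRetract huv ∘ c) r' := by
  induction h generalizing r' with
  | capture d hd hcap =>
    obtain ⟨i, hi⟩ := hcap
    refine .capture _ (hd.map_cornerRetract huv hdom) ⟨i, ?_⟩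
    simp only [Function.comp_apply, hi, ← hr, cornerRetract_coe]
  | step d hd _ ih =>
    refine .step _ (hd.map_cornerRetract huv hdom) fun s' hs' => ih s' ?_ s' rfl
    rw [← hr]
    exact hs'.imp (congrArg Subtype.val) id

theorem CopsCanCapture.of_map_cornerRetract (huv : u ≠ v)
    (hdom : insert u (G.neighborSet u) ⊆ insert v (G.neighborSet v)) {k : ℕ}
    {c' : Fin k → ({u}ᶜ : Set V)} {r' : ({u}ᶜ : Set V)}
    (h : CopsCanCapture (G.induce ({u}ᶜ : Set V)) c' r') (r : V)
    (hr : cornerRetract huv r = r') :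
    CopsCanCapture G (Subtype.val ∘ c') r := by
  induction h generalizing r with
  | capture d' hd hcap =>
    obtain ⟨i, hi⟩ := hcap
    by_cases hru : r = u
    · subst hru
      -- the cop `i` now sits on `v`, and every robber reply from `r` lies in `N[r] ⊆ N[v]`
      have hiv : (d' i : V) = v := by rw [hi, ← hr, cornerRetract_self]
      refine .step _ hd.coe_induce fun r₂ hr₂ =>
        .capture (Function.update (Subtype.val ∘ d') i r₂) (fun j => ?_) ⟨i, by simp⟩
      rcases eq_or_ne j i with rfl | hj
      · simpa [hiv] using hdom hr₂
      · simp [Function.update_of_ne hj]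
    · refine .capture _ hd.coe_induce ⟨i, ?_⟩
      simp only [Function.comp_apply, hi, ← hr, cornerRetract_of_ne huv hru]
  | step d' hd _ ih =>
    refine .step _ hd.coe_induce fun r₂ hr₂ => ih _ ?_ r₂ rfl
    rw [← hr]
    exact hr₂.map_cornerRetract huv hdom

theorem copsWin_induce_compl_singleton_iff [Finite V] (huv : u ≠ v)
    (hdom : insert u (G.neighborSet u) ⊆ insert v (G.neighborSet v)) (k : ℕ) :
    CopsWin (G.induce ({u}ᶜ : Set V)) k ↔ CopsWin G k := by
  simp only [copsWin_iff_exists_forall_copsCanCapture]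
  constructor
  · rintro ⟨c₀, hc₀⟩
    exact ⟨_, fun r => (hc₀ _).of_map_cornerRetract huv hdom r rfl⟩
  · rintro ⟨c₀, hc₀⟩
    exact ⟨_, fun r' => (hc₀ r').map_cornerRetract huv hdom r' rfl⟩

theorem copNumber_induce_compl_singleton [Finite V] (huv : u ≠ v)
    (hdom : insert u (G.neighborSet u) ⊆ insert v (G.neighborSet v)) :
    copNumber (G.induce ({u}ᶜ : Set V)) = copNumber G := by
  simp only [copNumber, copsWin_induce_compl_singleton_iff huv hdom]

end Corner

theorem IsClusterGraph.eq_or_adj_of_reachable {W : Type*} {H : SimpleGraph W}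
    (h : IsClusterGraph H) {x y : W} (hxy : H.Reachable x y) : x = y ∨ H.Adj x y := by
  obtain ⟨p⟩ := hxy
  induction p with
  | nil => exact Or.inl rfl
  | cons hadj _ ih => exact ih.elim (fun hyz => hyz ▸ Or.inr hadj) (h hadj)

theorem insert_neighborSet_subset_of_isClusterGraph {G : SimpleGraph V} {U : Set V}
    (hU : IsClusterGraph (G.induce Uᶜ)) {u v : V} {hu : u ∉ U} {hv : v ∉ U}
    (hsame : (G.induce Uᶜ).Reachable ⟨u, hu⟩ ⟨v, hv⟩)
    (hNU : G.neighborSet u ∩ U ⊆ G.neighborSet v ∩ U) :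
    insert u (G.neighborSet u) ⊆ insert v (G.neighborSet v) := by
  have huv : u = v ∨ G.Adj v u :=
    (hU.eq_or_adj_of_reachable hsame).imp (congrArg Subtype.val) Adj.symm
  rintro w (rfl | huw)
  · exact huv
  by_cases hwU : w ∈ U
  · exact Or.inr (hNU ⟨huw, hwU⟩).1
  rcases huv with rfl | hvu
  · exact Or.inr huw
  · exact (hU (x := ⟨v, hv⟩) (y := ⟨u, hu⟩) (z := ⟨w, hwU⟩) hvu huw).imp
      (congrArg Subtype.val ·.symm) id

theorem copNumber_delete_clique_dominated_general
    {V : Type*} [Fintype V] (G : SimpleGraph V)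
    (U : Set V) (hU : IsClusterGraph (G.induce Uᶜ))
    (u v : V) (hu : u ∉ U) (hv : v ∉ U) (huv : u ≠ v)
    (hsame : (G.induce Uᶜ).Reachable ⟨u, hu⟩ ⟨v, hv⟩)
    (hNU : G.neighborSet u ∩ U ⊆ G.neighborSet v ∩ U) :
    insert u (G.neighborSet u) ⊆ insert v (G.neighborSet v) ∧
      copNumber G = copNumber (G.induce ({u}ᶜ : Set V)) := by
  have hdom := insert_neighborSet_subset_of_isClusterGraph hU hsame hNU
  exact ⟨hdom, (copNumber_induce_compl_singleton huv hdom).symm⟩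

/-- If `u` and `v` are distinct vertices of the same clique of `G − U` (where `U` is a
cluster vertex deletion set) with `N_U(u) ⊆ N_U(v)`, then `N[u] ⊆ N[v]` and
`c(G) = c(G \ {u})`. -/
theorem copNumber_delete_clique_dominated
    {V : Type*} [Fintype V] (G : SimpleGraph V) (hG : G.Connected)
    (U : Set V) (hU : IsClusterGraph (G.induce Uᶜ))
    (u v : V) (hu : u ∉ U) (hv : v ∉ U) (huv : u ≠ v)
    (hsame : (G.induce Uᶜ).Reachable ⟨u, hu⟩ ⟨v, hv⟩)
    (hNU : G.neighborSet u ∩ U ⊆ G.neighborSet v ∩ U) :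
    insert u (G.neighborSet u) ⊆ insert v (G.neighborSet v) ∧
      copNumber G = copNumber (G.induce ({u}ᶜ : Set V)) :=
  copNumber_delete_clique_dominated_general G U hU u v hu hv huv hsame hNU
end

section
/- For any connected graph G, the cop number c(G) is at most the neighborhood diversity nd(G). -/
open SimpleGraph

variable {V : Type*}

/-- Two vertices have the same type: `N(u) \ {v} = N(v) \ {u}`. -/
def SameType {V : Type*} (G : SimpleGraph V) (u v : V) : Prop :=
  G.neighborSet u \ {v} = G.neighborSet v \ {u}

/-- The neighbourhood diversity of `G`: the least `w` such that `V(G)` can be partitioned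
into at most `w` classes of pairwise same-type vertices. -/
noncomputable def ndNumber {V : Type*} (G : SimpleGraph V) : ℕ :=
  sInf {w | ∃ f : V → Fin w, ∀ u v : V, f u = f v → SameType G u v}


lemma copsWin_of_typing {V : Type*} (G : SimpleGraph V) (hG : G.Connected)
    {w : ℕ} (f : V → Fin w) (hf : ∀ u v : V, f u = f v → SameType G u v) :
    CopsWin G w := by
  classical
  haveI : Nonempty V := hG.nonempty
  set rep : Fin w → V := fun j =>
    if h : ∃ x, f x = j then h.choose else Classical.arbitrary V with hrep
  have hdom : ∀ v : V, ∃ i : Fin w, rep i = v ∨ G.Adj (rep i) v := by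
    intro v
    by_cases hnb : ∃ u, G.Adj v u
    · obtain ⟨u, hu⟩ := hnb
      refine ⟨f u, ?_⟩
      have hex : ∃ x, f x = f u := ⟨u, rfl⟩
      have hrepval : rep (f u) = hex.choose := by simp [hrep, hex]
      have hfeq : f (rep (f u)) = f u := by rw [hrepval]; exact hex.choose_spec
      by_cases hv : rep (f u) = v
      · exact Or.inl hv
      · right
        have hst : SameType G u (rep (f u)) := hf u _ hfeq.symm
        have hvmem : v ∈ G.neighborSet u \ {rep (f u)} := by
          constructor
          · exact hu.symm
          · simpa using (Ne.symm hv)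
        rw [hst] at hvmem
        exact hvmem.1
    · -- v has no neighbor; since G is connected, V = {v}
      have hall : ∀ x : V, x = v := by
        intro x
        have hr : G.Reachable v x := hG v x
        obtain ⟨p⟩ := hr
        cases p with
        | nil => rfl
        | cons h _ => exact absurd ⟨_, h⟩ hnb
      refine ⟨f v, Or.inl (hall _)⟩
  refine ⟨⟨rep, fun c r i => if G.Adj (c i) r then r else c i, ?_⟩, ?_⟩
  · intro c r i
    by_cases h : G.Adj (c i) r
    · right; simp only [if_pos h]; exact h
    · left; simp [h]
  · intro RS
    obtain ⟨i, hi⟩ := hdom (RS.init rep)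
    refine ⟨0, i, ?_⟩
    rcases hi with h | h
    · exact Or.inl h
    · right
      show (if G.Adj (rep i) (RS.init rep) then RS.init rep else rep i) = RS.init rep
      simp [h]

/-- For any connected graph `G`, `c(G) ≤ nd(G)`. -/
theorem copNumber_le_ndNumber
    {V : Type*} [Fintype V] (G : SimpleGraph V) (hG : G.Connected) :
    copNumber G ≤ ndNumber G := by
  classical
  have hS : {w | ∃ f : V → Fin w, ∀ u v : V, f u = f v → SameType G u v}.Nonempty := by
    refine ⟨Fintype.card V, Fintype.equivFin V, ?_⟩
    intro u v h
    have : u = v := (Fintype.equivFin V).injective h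
    subst this
    rfl
  obtain ⟨f, hf⟩ := Nat.sInf_mem hS
  exact Nat.sInf_le (copsWin_of_typing G hG f hf)
end

section
/- Let G be a connected graph, V_i = {v_1, …, v_ℓ} (ℓ ≥ 2) a neighborhood class of G (all vertices pairwise of the same type), and H = G[V(G)\{v_ℓ}]. Then for every k ≥ 2, G is k-copwin if and only if H is k-copwin. -/
/-! Cops' winning positions (cops to move) form the least fixed point of the one-round
capture operator; since the strategies are positional, `k` cops win on a finite graph iff from
some start they win against every robber position. Folding the deleted vertex `v` onto a twin
`w` maps lazy moves of `G` to lazy moves of `H = G - v`, and every lazy move of the folded robber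
in `H` lifts to `G`; so winning positions of `G` fold to winning positions of `H`. Conversely the
cops of `G` copy the cops of `H` playing against the folded robber. When those capture the
folded robber on `w` while the real robber sits on `v`, one cop stays on `w`, which dominates
every neighbour of `v`, and a second cop walks to `v`. -/

open SimpleGraph

variable {V : Type*}

namespace SimpleGraph

def LazyAdj (G : SimpleGraph V) (x y : V) : Prop := y = x ∨ G.Adj x y

def CopMove (G : SimpleGraph V) {k : ℕ} (c c' : Fin k → V) : Prop :=
  ∀ i, G.LazyAdj (c i) (c' i)

/-- Positions `(c, r)` have the cops to move. -/
inductive CopsWinFrom (G : SimpleGraph V) {k : ℕ} : (Fin k → V) → V → Prop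
  | capture {c r} (c' : Fin k → V) (i : Fin k) : G.CopMove c c' → c' i = r → G.CopsWinFrom c r
  | move {c r} (c' : Fin k → V) : G.CopMove c c' →
      (∀ r', G.LazyAdj r r' → G.CopsWinFrom c' r') → G.CopsWinFrom c r

def CatchWithin (G : SimpleGraph V) {k : ℕ} : ℕ → (Fin k → V) → V → Prop
  | 0, _, _ => False
  | n + 1, c, r => ∃ c', G.CopMove c c' ∧
      ((∃ i, c' i = r) ∨ ∀ r', G.LazyAdj r r' → G.CatchWithin n c' r')

variable {G : SimpleGraph V} {k : ℕ} {c c' : Fin k → V} {r v w x y : V}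

theorem LazyAdj.refl (x : V) : G.LazyAdj x x := Or.inl rfl

theorem LazyAdj.symm (h : G.LazyAdj x y) : G.LazyAdj y x := h.imp Eq.symm Adj.symm

@[simp]
theorem lazyAdj_induce_iff {s : Set V} {a b : s} : (G.induce s).LazyAdj a b ↔ G.LazyAdj a b :=
  or_congr Subtype.ext_iff Iff.rfl

theorem CopMove.update {i : Fin k} (h : G.LazyAdj (c i) x) :
    G.CopMove c (Function.update c i x) := by
  intro j
  by_cases hj : j = i
  · subst hj
    simpa using h
  · simp [Function.update_of_ne hj, LazyAdj.refl]

theorem CopsWinFrom.of_eq {i : Fin k} (h : c i = r) : G.CopsWinFrom c r :=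
  .capture c i (fun _ => .refl _) h

theorem exists_lazyAdj_not_copsWinFrom (h : ¬G.CopsWinFrom c r) (hmove : G.CopMove c c') :
    ∃ r', G.LazyAdj r r' ∧ ¬G.CopsWinFrom c' r' := by
  by_contra! hall
  exact h (.move c' hmove hall)

theorem catchWithin_succ_of_catchWithin :
    ∀ {n : ℕ} {c : Fin k → V} {r : V}, G.CatchWithin n c r → G.CatchWithin (n + 1) c r
  | 0, _, _, h => h.elim
  | _ + 1, _, _, ⟨c', hmove, h⟩ =>
    ⟨c', hmove, h.imp_right fun h r' hr' => catchWithin_succ_of_catchWithin (h r' hr')⟩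

theorem monotone_catchWithin (c : Fin k → V) (r : V) : Monotone fun n => G.CatchWithin n c r :=
  monotone_nat_of_le_succ fun _ => catchWithin_succ_of_catchWithin

theorem CatchWithin.exists_move :
    ∀ {n : ℕ}, G.CatchWithin n c r → ∃ c', G.CopMove c c' ∧
      ((∃ i, c' i = r) ∨ ∃ m < n, ∀ r', G.LazyAdj r r' → G.CatchWithin m c' r')
  | 0, h => h.elim
  | n + 1, ⟨c', hmove, h⟩ => ⟨c', hmove, h.imp_right fun h => ⟨n, n.lt_succ_self, h⟩⟩

theorem CopsWinFrom.exists_catchWithin [Finite V] (h : G.CopsWinFrom c r) :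
    ∃ n, G.CatchWithin n c r := by
  induction h with
  | capture c' i hmove hi => exact ⟨1, c', hmove, Or.inl ⟨i, hi⟩⟩
  | @move c r c' hmove _ ih =>
    -- the robber has finitely many replies, so a single bound serves all of them
    have hbound : ∀ᶠ n in Filter.atTop, ∀ r', G.LazyAdj r r' → G.CatchWithin n c' r' :=
      Filter.eventually_all.2 fun r' => Filter.eventually_imp_distrib_left.2 fun hr' =>
        let ⟨m, hm⟩ := ih r' hr'
        Filter.eventually_atTop.2 ⟨m, fun _ hn => monotone_catchWithin c' r' hn hm⟩
    obtain ⟨n, hn⟩ := hbound.exists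
    exact ⟨n + 1, c', hmove, Or.inr hn⟩

open Classical in
noncomputable def catchingStrategy (G : SimpleGraph V) (c₀ : Fin k → V) : CopStrat G k where
  init := c₀
  move c r := if h : ∃ n, G.CatchWithin n c r then (Nat.find_spec h).exists_move.choose else c
  valid c r := by
    split_ifs with h
    exacts [(Nat.find_spec h).exists_move.choose_spec.1, fun _ => Or.inl rfl]

open Classical in
theorem catchingStrategy_move {c₀ : Fin k → V} {n : ℕ} (h : G.CatchWithin n c r) :
    (∃ i, (catchingStrategy G c₀).move c r i = r) ∨ ∃ m < n, ∀ r', G.LazyAdj r r' →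
      G.CatchWithin m ((catchingStrategy G c₀).move c r) r' := by
  have hex : ∃ n, G.CatchWithin n c r := ⟨n, h⟩
  have hmove : (catchingStrategy G c₀).move c r = (Nat.find_spec hex).exists_move.choose :=
    dif_pos hex
  rw [hmove]
  exact (Nat.find_spec hex).exists_move.choose_spec.2.imp_right fun ⟨m, hm, hcatch⟩ =>
    ⟨m, hm.trans_le (Nat.find_min' hex h), hcatch⟩

theorem copsWin_of_forall_copsWinFrom [Finite V] (c₀ : Fin k → V)
    (h : ∀ r, G.CopsWinFrom c₀ r) : CopsWin G k := by
  refine ⟨catchingStrategy G c₀, fun RS => ?_⟩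
  let play := gplay (catchingStrategy G c₀).init (catchingStrategy G c₀).move RS.init RS.move
  suffices ∀ n t, G.CatchWithin n (play t).1 (play t).2 →
      gCaught (catchingStrategy G c₀).init (catchingStrategy G c₀).move RS.init RS.move by
    obtain ⟨n, hn⟩ := (h (RS.init c₀)).exists_catchWithin
    exact this n 0 hn
  intro n
  induction n using Nat.strong_induction_on with
  | _ n ih =>
    intro t ht
    rcases catchingStrategy_move ht with ⟨i, hi⟩ | ⟨m, hmn, hm⟩
    · exact ⟨t, i, Or.inr hi⟩
    · exact ih m hmn (t + 1) (hm _ (RS.valid _ _))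

open Classical in
noncomputable def evasionStrategy (G : SimpleGraph V) (k : ℕ) (r₀ : V) : RobStrat G k where
  init _ := r₀
  move c r := if h : ∃ r', G.LazyAdj r r' ∧ ¬G.CopsWinFrom c r' then h.choose else r
  valid c r := by
    split_ifs with h
    exacts [h.choose_spec.1, Or.inl rfl]

theorem evasionStrategy_move {r₀ : V} (h : ¬G.CopsWinFrom c r) (hmove : G.CopMove c c') :
    ¬G.CopsWinFrom c' ((evasionStrategy G k r₀).move c' r) := by
  have hex := exists_lazyAdj_not_copsWinFrom h hmove
  have hmove : (evasionStrategy G k r₀).move c' r = hex.choose := dif_pos hex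
  exact hmove ▸ hex.choose_spec.2

theorem exists_forall_copsWinFrom_of_copsWin (h : CopsWin G k) :
    ∃ c₀ : Fin k → V, ∀ r, G.CopsWinFrom c₀ r := by
  obtain ⟨CS, hCS⟩ := h
  refine ⟨CS.init, fun r₀ => by_contra fun hr₀ => ?_⟩
  let RS := evasionStrategy G k r₀
  have hplay : ∀ t, ¬G.CopsWinFrom (gplay CS.init CS.move RS.init RS.move t).1
      (gplay CS.init CS.move RS.init RS.move t).2 := by
    intro t
    induction t with
    | zero => exact hr₀
    | succ t ih => exact evasionStrategy_move (r₀ := r₀) ih (CS.valid _ _)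
  obtain ⟨t, i, hi | hi⟩ := hCS RS
  · exact hplay t (.of_eq hi)
  · exact hplay t (.capture _ i (CS.valid _ _) hi)

theorem copsWin_iff_exists_forall_copsWinFrom [Finite V] :
    CopsWin G k ↔ ∃ c₀ : Fin k → V, ∀ r, G.CopsWinFrom c₀ r :=
  ⟨exists_forall_copsWinFrom_of_copsWin, fun ⟨c₀, h⟩ =>
    copsWin_of_forall_copsWinFrom c₀ h⟩

theorem CopMove.subtype_val {s : Set V} {d d' : Fin k → s} (h : (G.induce s).CopMove d d') :
    G.CopMove (Subtype.val ∘ d) (Subtype.val ∘ d') :=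
  fun j => lazyAdj_induce_iff.1 (h j)

section Collapse

open Classical in
noncomputable def collapse (hw : w ≠ v) (x : V) : ({v}ᶜ : Set V) :=
  if hx : x = v then ⟨w, hw⟩ else ⟨x, hx⟩

variable (hw : w ≠ v)

@[simp]
theorem coe_collapse_self : (collapse hw v : V) = w := by simp [collapse]

theorem coe_collapse_of_ne (hx : x ≠ v) : (collapse hw x : V) = x := by simp [collapse, hx]

@[simp]
theorem collapse_coe (a : ({v}ᶜ : Set V)) : collapse hw a = a :=
  Subtype.ext (coe_collapse_of_ne hw a.2)

theorem eq_or_of_collapse_eq {ρ : ({v}ᶜ : Set V)} (h : collapse hw r = ρ) :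
    r = ρ ∨ r = v ∧ (ρ : V) = w := by
  by_cases hr : r = v
  · rw [← h, hr, coe_collapse_self]
    exact Or.inr ⟨rfl, rfl⟩
  · rw [← h, coe_collapse_of_ne hw hr]
    exact Or.inl rfl

theorem lazyAdj_coe_collapse_of_adj (hvw : G.neighborSet v \ {w} ⊆ G.neighborSet w)
    (h : G.Adj v y) : G.LazyAdj w (collapse hw y) := by
  rw [coe_collapse_of_ne hw (G.ne_of_adj h).symm]
  by_cases hy : y = w
  · exact Or.inl hy
  · exact Or.inr (hvw ⟨h, hy⟩)

theorem lazyAdj_collapse (hvw : G.neighborSet v \ {w} ⊆ G.neighborSet w) (h : G.LazyAdj x y) :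
    (G.induce ({v}ᶜ : Set V)).LazyAdj (collapse hw x) (collapse hw y) := by
  rw [lazyAdj_induce_iff]
  rcases h with rfl | h
  · exact .refl _
  by_cases hx : x = v
  · rw [hx] at h ⊢
    simpa using lazyAdj_coe_collapse_of_adj hw hvw h
  by_cases hy : y = v
  · rw [hy] at h ⊢
    simpa using (lazyAdj_coe_collapse_of_adj hw hvw h.symm).symm
  · rw [coe_collapse_of_ne hw hx, coe_collapse_of_ne hw hy]
    exact Or.inr h

theorem exists_lazyAdj_collapse_eq (hwv : G.neighborSet w \ {v} ⊆ G.neighborSet v)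
    {ρ : ({v}ᶜ : Set V)} (h : (G.induce ({v}ᶜ : Set V)).LazyAdj (collapse hw r) ρ) :
    ∃ r', G.LazyAdj r r' ∧ collapse hw r' = ρ := by
  rcases h with h | h
  · exact ⟨r, .refl r, h.symm⟩
  refine ⟨ρ, Or.inr ?_, collapse_coe hw ρ⟩
  rw [induce_adj] at h
  by_cases hr : r = v
  · rw [hr] at h ⊢
    rw [coe_collapse_self] at h
    exact hwv ⟨h, ρ.2⟩
  · rwa [coe_collapse_of_ne hw hr] at h

theorem CopsWinFrom.map_collapse (hvw : G.neighborSet v \ {w} ⊆ G.neighborSet w)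
    (hwv : G.neighborSet w \ {v} ⊆ G.neighborSet v) (h : G.CopsWinFrom c r) :
    (G.induce ({v}ᶜ : Set V)).CopsWinFrom (collapse hw ∘ c) (collapse hw r) := by
  induction h with
  | capture c' i hmove hi =>
    exact .capture _ i (fun j => lazyAdj_collapse hw hvw (hmove j)) (congrArg _ hi)
  | move c' hmove _ ih =>
    refine .move _ (fun j => lazyAdj_collapse hw hvw (hmove j)) fun ρ hρ => ?_
    obtain ⟨r', hr', rfl⟩ := exists_lazyAdj_collapse_eq hw hwv hρ
    exact ih r' hr'

end Collapse

theorem copsWinFrom_of_guard_of_adj (hvw : G.neighborSet v \ {w} ⊆ G.neighborSet w) {i : Fin k}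
    (hc : c i = w) (hr : G.Adj v r) : G.CopsWinFrom c r := by
  by_cases hrw : r = w
  · exact .of_eq (hc.trans hrw.symm)
  · refine .capture _ i (CopMove.update (Or.inr ?_)) (Function.update_self ..)
    rw [hc]
    exact hvw ⟨hr, hrw⟩

theorem copsWinFrom_of_guard_of_walk (hvw : G.neighborSet v \ {w} ⊆ G.neighborSet w)
    {i j : Fin k} (hij : i ≠ j) {x : V} (p : G.Walk x v) (hi : c i = w) (hj : c j = x) :
    G.CopsWinFrom c v := by
  induction p generalizing c with
  | nil => exact .of_eq hj
  | @cons x y _ hxy q ih =>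
    refine .move _ (CopMove.update (i := j) (Or.inr (hj ▸ hxy))) fun r' hr' => ?_
    have hi' : Function.update c j y i = w := by rw [Function.update_of_ne hij, hi]
    rcases hr' with rfl | hr'
    · exact ih hvw hi' (Function.update_self ..)
    · exact copsWinFrom_of_guard_of_adj hvw hi' hr'

theorem copsWinFrom_of_guard (hvw : G.neighborSet v \ {w} ⊆ G.neighborSet w)
    (hG : G.Preconnected) (hk : 2 ≤ k) {i : Fin k} (hc : c i = w) (hr : G.LazyAdj v r) :
    G.CopsWinFrom c r := by
  rcases hr with rfl | hr
  · have : Nontrivial (Fin k) := Fin.nontrivial_iff_two_le.2 hk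
    obtain ⟨j, hji⟩ := exists_ne i
    exact copsWinFrom_of_guard_of_walk hvw hji.symm (hG (c j) r).some hc rfl
  · exact copsWinFrom_of_guard_of_adj hvw hc hr

theorem CopsWinFrom.of_collapse (hw : w ≠ v)
    (hvw : G.neighborSet v \ {w} ⊆ G.neighborSet w) (hG : G.Preconnected) (hk : 2 ≤ k)
    {d : Fin k → ({v}ᶜ : Set V)} {ρ : ({v}ᶜ : Set V)}
    (h : (G.induce ({v}ᶜ : Set V)).CopsWinFrom d ρ) (hr : collapse hw r = ρ) :
    G.CopsWinFrom (Subtype.val ∘ d) r := by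
  induction h generalizing r with
  | capture d' i hmove hi =>
    rcases eq_or_of_collapse_eq hw hr with rfl | ⟨rfl, hρ⟩
    · exact .capture _ i hmove.subtype_val (congrArg Subtype.val hi)
    · exact .move _ hmove.subtype_val fun r' hr' =>
        copsWinFrom_of_guard hvw hG hk (i := i) (by simp [hi, hρ]) hr'
  | move d' hmove _ ih =>
    exact .move _ hmove.subtype_val fun r' hr' =>
      ih _ (hr ▸ lazyAdj_collapse hw hvw hr') rfl

theorem copsWin_iff_copsWin_induce_compl_singleton [Finite V] (hG : G.Preconnected)
    (hk : 2 ≤ k) (hw : w ≠ v) (h : SameType G w v) :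
    CopsWin G k ↔ CopsWin (G.induce ({v}ᶜ : Set V)) k := by
  have hvw : G.neighborSet v \ {w} ⊆ G.neighborSet w := h ▸ Set.sdiff_subset
  have hwv : G.neighborSet w \ {v} ⊆ G.neighborSet v := h.symm ▸ Set.sdiff_subset
  rw [copsWin_iff_exists_forall_copsWinFrom, copsWin_iff_exists_forall_copsWinFrom]
  constructor
  · rintro ⟨c₀, hc₀⟩
    exact ⟨collapse hw ∘ c₀, fun ρ => by simpa using (hc₀ ρ).map_collapse hw hvw hwv⟩
  · rintro ⟨d₀, hd₀⟩
    exact ⟨Subtype.val ∘ d₀, fun r => (hd₀ _).of_collapse hw hvw hG hk rfl⟩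

end SimpleGraph

/-- If `S` is a neighbourhood class of `G` (all vertices pairwise of the same type) with
at least 2 vertices and `vl ∈ S`, then for every `k ≥ 2`, `G` is `k`-copwin iff
`G[V(G) \ {vl}]` is `k`-copwin. -/
theorem copsWin_iff_copsWin_delete_class_vertex
    {V : Type*} [Fintype V] (G : SimpleGraph V) (hG : G.Connected)
    (S : Finset V) (hS2 : 2 ≤ S.card)
    (hS : ∀ u ∈ S, ∀ v ∈ S, SameType G u v)
    (vl : V) (hvl : vl ∈ S) (k : ℕ) (hk : 2 ≤ k) :
    CopsWin G k ↔ CopsWin (G.induce ({vl}ᶜ : Set V)) k := by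
  obtain ⟨w, hwS, hw⟩ := Finset.exists_mem_ne hS2 vl
  exact copsWin_iff_copsWin_induce_compl_singleton hG.preconnected hk hw (hS w hwS vl hvl)
end

section
/- For any connected graph G, the surrounding cop number satisfies c_surround(G) ≥ δ(G), where δ(G) is the minimum degree of G. -/
open SimpleGraph

variable {V : Type*}

/-- A robber strategy in the surrounding game: the robber may share a vertex with a cop
during play, but can never end its turn (or start) on a vertex occupied by a cop. -/
structure SurRobStrat (G : SimpleGraph V) (k : ℕ) where
  init : (Fin k → V) → V
  init_valid : ∀ c i, c i ≠ init c
  move : (Fin k → V) → V → V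
  valid : ∀ c r, (move c r = r ∨ G.Adj r (move c r)) ∧ ∀ i, c i ≠ move c r

/-- The robber at `r` is surrounded by cops at positions `c`: every neighbour of `r`
is occupied by a cop. -/
def Surrounded {k : ℕ} (G : SimpleGraph V) (c : Fin k → V) (r : V) : Prop :=
  ∀ w, G.Adj r w → ∃ i, c i = w

/-- `k` cops can guarantee surrounding the robber on `G`. -/
def SurroundWin (G : SimpleGraph V) (k : ℕ) : Prop :=
  ∃ CS : CopStrat G k, ∀ RS : SurRobStrat G k, ∃ n,
    Surrounded G (gplay CS.init CS.move RS.init RS.move n).1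
        (gplay CS.init CS.move RS.init RS.move n).2 ∨
      Surrounded G
        (CS.move (gplay CS.init CS.move RS.init RS.move n).1
          (gplay CS.init CS.move RS.init RS.move n).2)
        (gplay CS.init CS.move RS.init RS.move n).2

/-- The surrounding cop number of `G`. -/
noncomputable def surroundCopNumber (G : SimpleGraph V) : ℕ :=
  sInf {k | SurroundWin G k}

/-- For any connected graph `G`, `c_surround(G) ≥ δ(G)`. -/
theorem minDegree_le_surroundCopNumber
    {V : Type*} [Fintype V] (G : SimpleGraph V) [DecidableRel G.Adj]
    (hG : G.Connected) :
    G.minDegree ≤ surroundCopNumber G := by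
  classical
  obtain ⟨v0⟩ := hG.nonempty
  have hcard : G.minDegree < Fintype.card V :=
    lt_of_le_of_lt (G.minDegree_le_degree v0) (G.degree_lt_card_verts v0)
  apply le_csInf
  · refine ⟨Fintype.card V, ⟨⟨fun i => (Fintype.equivFin V).symm i,
      fun c _ i => c i, fun _ _ _ => Or.inl rfl⟩, ?_⟩⟩
    intro RS
    exfalso
    obtain ⟨i, hi⟩ := (Fintype.equivFin V).symm.surjective
      (RS.init (fun i => (Fintype.equivFin V).symm i))
    exact RS.init_valid (fun i => (Fintype.equivFin V).symm i) i hi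
  · intro k hk
    by_contra hlt
    push_neg at hlt
    have hfree : ∀ c : Fin k → V, ∃ v, ∀ i, c i ≠ v := by
      intro c
      have hns : ¬ Function.Surjective c := by
        intro hs
        have := Fintype.card_le_of_surjective c hs
        simp only [Fintype.card_fin] at this
        omega
      simp only [Function.Surjective, not_forall] at hns
      obtain ⟨v, hv⟩ := hns
      exact ⟨v, fun i hi => hv ⟨i, hi⟩⟩
    have himg : ∀ c : Fin k → V, (Finset.image c Finset.univ).card ≤ k := by
      intro c
      refine le_trans Finset.card_image_le ?_
      simp
    have hmove : ∀ (c : Fin k → V) (r : V), ∃ v, G.Adj r v ∧ ∀ i, c i ≠ v := by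
      intro c r
      have h2 : (Finset.image c Finset.univ).card < (G.neighborFinset r).card := by
        rw [G.card_neighborFinset_eq_degree]
        exact lt_of_le_of_lt (himg c) (lt_of_lt_of_le hlt (G.minDegree_le_degree r))
      by_contra hno
      push_neg at hno
      have hsub : G.neighborFinset r ⊆ Finset.image c Finset.univ := by
        intro w hw
        obtain ⟨i, hi⟩ := hno w ((G.mem_neighborFinset r w).1 hw)
        exact Finset.mem_image.2 ⟨i, Finset.mem_univ i, hi⟩
      exact absurd (Finset.card_le_card hsub) (not_le.2 h2)
    obtain ⟨CS, hCS⟩ := hk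
    set RS : SurRobStrat G k :=
      { init := fun c => (hfree c).choose
        init_valid := fun c => (hfree c).choose_spec
        move := fun c r => (hmove c r).choose
        valid := fun c r => ⟨Or.inr (hmove c r).choose_spec.1, (hmove c r).choose_spec.2⟩ }
    obtain ⟨n, hn⟩ := hCS RS
    have hdeg : ∀ (c : Fin k → V) (r : V), Surrounded G c r → G.degree r ≤ k := by
      intro c r hs
      have hsub : G.neighborFinset r ⊆ Finset.image c Finset.univ := by
        intro w hw
        obtain ⟨i, hi⟩ := hs w ((G.mem_neighborFinset r w).1 hw)
        exact Finset.mem_image.2 ⟨i, Finset.mem_univ i, hi⟩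
      calc G.degree r = (G.neighborFinset r).card := (G.card_neighborFinset_eq_degree r).symm
        _ ≤ _ := Finset.card_le_card hsub
        _ ≤ k := himg c
    have hδ : G.minDegree ≤ k := by
      rcases hn with h | h
      · exact le_trans (G.minDegree_le_degree _) (hdeg _ _ h)
      · exact le_trans (G.minDegree_le_degree _) (hdeg _ _ h)
    omega
end

section
/- For any connected graph G: (a) c(G) ≤ c_lazy(G); (b) c(G) ≤ c_attack(G) ≤ 2·c(G); (c) c_active(G) ≤ 2·c(G). -/
/-!
A lazy strategy is a classical one. A strategy for the attacking game can be played verbatim in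
the classical game: until he is caught, a classical robber never steps onto a cop, so no cop is
eliminated. Conversely, `2k` cops moving as `k` pairs of twins follow a classical `k`-cop
strategy, and a robber attacking a twin pair eliminates nobody.

For the fully active game each classical cop is shadowed by two active cops occupying an edge,
one end of which is the classical cop's vertex; whether the classical cop stays or crosses an
edge, both active cops can move so as to restore this. The active configuration does not
remember which end that is, so the simulation is run on positions rather than strategies: a
winning classical strategy on a finite graph gives, from its start, a bound on the number of
rounds needed against each robber start; the pairing transfers these bounds to the active game;
and playing moves that lower the bound is a positional active strategy.
-/

open SimpleGraph

variable {V : Type*}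

/-- A lazy cop strategy: at most one cop moves in each cops' turn. -/
structure LazyCopStrat (G : SimpleGraph V) (k : ℕ) extends CopStrat G k where
  lazy : ∀ c r i j, move c r i ≠ c i → move c r j ≠ c j → i = j

/-- `k` lazy cops have a winning strategy on `G`. -/
def LazyCopsWin (G : SimpleGraph V) (k : ℕ) : Prop :=
  ∃ CS : LazyCopStrat G k, ∀ RS : RobStrat G k,
    gCaught CS.init CS.move RS.init RS.move

/-- The lazy cop number of `G`. -/
noncomputable def lazyCopNumber (G : SimpleGraph V) : ℕ := sInf {k | LazyCopsWin G k}

/-- A cop strategy in the attacking game: positions are `Option V` (`none` = eliminated);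
eliminated cops stay eliminated, surviving cops stay or move to an adjacent vertex. -/
structure AttackCopStrat (G : SimpleGraph V) (k : ℕ) where
  init : Fin k → V
  move : (Fin k → Option V) → V → Fin k → Option V
  valid : ∀ c r i, (c i = none → move c r i = none) ∧
    ∀ x, c i = some x → move c r i = some x ∨ ∃ y, G.Adj x y ∧ move c r i = some y

/-- A robber strategy in the attacking game; moving onto a vertex occupied by a cop
constitutes an attack. -/
structure AttackRobStrat (G : SimpleGraph V) (k : ℕ) where
  init : (Fin k → Option V) → V
  move : (Fin k → Option V) → V → V
  valid : ∀ c r, move c r = r ∨ G.Adj r (move c r)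

/-- The play of the attacking game: in each round the cops move, then the robber moves;
if the robber moves onto a vertex occupied by exactly one cop, that cop is eliminated
(if it is occupied by two or more cops, nobody is eliminated and the robber will be
caught there). -/
def aplay [DecidableEq V] {G : SimpleGraph V} {k : ℕ}
    (CS : AttackCopStrat G k) (RS : AttackRobStrat G k) :
    ℕ → (Fin k → Option V) × V
  | 0 => ((fun i => some (CS.init i)), RS.init fun i => some (CS.init i))
  | n + 1 =>
    let p := aplay CS RS n
    let c' := CS.move p.1 p.2
    let r' := RS.move c' p.2
    if r' ≠ p.2 ∧ (Finset.univ.filter fun i => c' i = some r').card = 1 then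
      ((fun i => if c' i = some r' then none else c' i), r')
    else (c', r')

/-- The robber is caught in the attacking game: at some moment a (surviving) cop occupies
the robber's vertex, either after the cops' move or after the robber's move (in particular
when the robber attacks a vertex holding at least two cops). -/
def AttackCaught [DecidableEq V] {G : SimpleGraph V} {k : ℕ}
    (CS : AttackCopStrat G k) (RS : AttackRobStrat G k) : Prop :=
  ∃ n, (∃ i, (aplay CS RS n).1 i = some (aplay CS RS n).2) ∨
    ∃ i, CS.move (aplay CS RS n).1 (aplay CS RS n).2 i = some (aplay CS RS n).2

/-- `k` cops have a winning strategy against an attacking robber on `G`. -/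
def AttackCopsWin [DecidableEq V] (G : SimpleGraph V) (k : ℕ) : Prop :=
  ∃ CS : AttackCopStrat G k, ∀ RS : AttackRobStrat G k, AttackCaught CS RS

/-- The attacking cop number of `G`. -/
noncomputable def attackCopNumber [DecidableEq V] (G : SimpleGraph V) : ℕ :=
  sInf {k | AttackCopsWin G k}

/-- A fully active cop strategy: every cop must move to an adjacent vertex each turn. -/
structure ActiveCopStrat (G : SimpleGraph V) (k : ℕ) where
  init : Fin k → V
  move : (Fin k → V) → V → Fin k → V
  valid : ∀ c r i, G.Adj (c i) (move c r i)

/-- A fully active robber strategy: the robber must move to an adjacent vertex each turn. -/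
structure ActiveRobStrat (G : SimpleGraph V) (k : ℕ) where
  init : (Fin k → V) → V
  move : (Fin k → V) → V → V
  valid : ∀ c r, G.Adj r (move c r)

/-- `k` fully active cops have a winning strategy on `G` (against a fully active robber). -/
def ActiveCopsWin (G : SimpleGraph V) (k : ℕ) : Prop :=
  ∃ CS : ActiveCopStrat G k, ∀ RS : ActiveRobStrat G k,
    gCaught CS.init CS.move RS.init RS.move

/-- The fully active cop number of `G`. -/
noncomputable def activeCopNumber (G : SimpleGraph V) : ℕ :=
  sInf {k | ActiveCopsWin G k}

open Finset

section CatchGame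

variable {ι : Type*} (M : V → V → Prop)

/-- In the game where cops and robber all move along `M`, the cops at `c`, to move, can force
the capture of the robber at `r` within `n` rounds. -/
def CanCatchWithin : ℕ → (ι → V) → V → Prop
  | 0, _, _ => False
  | n + 1, c, r => (∃ i, c i = r) ∨ ∃ c' : ι → V, (∀ i, M (c i) (c' i)) ∧
      ((∃ i, c' i = r) ∨ ∀ r', M r r' → CanCatchWithin n c' r')

variable {M}

theorem CanCatchWithin.succ {n : ℕ} {c : ι → V} {r : V} (h : CanCatchWithin M n c r) :
    CanCatchWithin M (n + 1) c r := by
  induction n generalizing c r with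
  | zero => exact h.elim
  | succ n ih =>
    rcases h with h | ⟨c', hc', h | h⟩
    · exact Or.inl h
    · exact Or.inr ⟨c', hc', Or.inl h⟩
    · exact Or.inr ⟨c', hc', Or.inr fun r' hr' => ih (h r' hr')⟩

theorem CanCatchWithin.mono {n m : ℕ} {c : ι → V} {r : V} (hnm : n ≤ m)
    (h : CanCatchWithin M n c r) : CanCatchWithin M m c r := by
  induction hnm with
  | refl => exact h
  | step _ ih => exact ih.succ

theorem CanCatchWithin.of_simulation {κ : Type*} {N : V → V → Prop}
    (R : (ι → V) → (κ → V) → Prop)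
    (hcatch : ∀ c d r, R c d → (∃ i, c i = r) → ∃ j, d j = r)
    (hstep : ∀ c c' d, R c d → (∀ i, M (c i) (c' i)) →
      ∃ d', (∀ j, N (d j) (d' j)) ∧ R c' d')
    (hrob : ∀ r r', N r r' → M r r') {n : ℕ} {c : ι → V} {d : κ → V} {r : V}
    (h : CanCatchWithin M n c r) (hcd : R c d) : CanCatchWithin N n d r := by
  induction n generalizing c d r with
  | zero => exact h.elim
  | succ n ih =>
    rcases h with h | ⟨c', hc', h⟩
    · exact Or.inl (hcatch c d r hcd h)
    obtain ⟨d', hd', hcd'⟩ := hstep c c' d hcd hc'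
    rcases h with h | h
    · exact Or.inr ⟨d', hd', Or.inl (hcatch c' d' r hcd' h)⟩
    · exact Or.inr ⟨d', hd', Or.inr fun r' hr' => ih (h r' (hrob r r' hr')) hcd'⟩

theorem exists_canCatchWithin_of_forall_response [Finite V] {c c' : ι → V} {r : V}
    (hmove : ∀ i, M (c i) (c' i)) (h : ∀ r', M r r' → ∃ n, CanCatchWithin M n c' r') :
    ∃ n, CanCatchWithin M n c r := by
  choose! f hf using h
  obtain ⟨N, hN⟩ := (Set.finite_range f).bddAbove
  exact ⟨N + 1, Or.inr ⟨c', hmove, Or.inr fun r' hr' => (hf r' hr').mono (hN ⟨r', rfl⟩)⟩⟩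

theorem gplay_succ {k : ℕ} (ci : Fin k → V) (cm : (Fin k → V) → V → Fin k → V)
    (ri : (Fin k → V) → V) (rm : (Fin k → V) → V → V) (n : ℕ) :
    gplay ci cm ri rm (n + 1) =
      (cm (gplay ci cm ri rm n).1 (gplay ci cm ri rm n).2,
        rm (cm (gplay ci cm ri rm n).1 (gplay ci cm ri rm n).2) (gplay ci cm ri rm n).2) :=
  rfl

theorem exists_canCatchWithin_of_forall_gCaught [Finite V] {k : ℕ} (hM : ∀ v, ∃ w, M v w)
    {c₀ : Fin k → V} {cm : (Fin k → V) → V → Fin k → V} (hcm : ∀ c r i, M (c i) (cm c r i))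
    (hwin : ∀ ri rm, (∀ c r, M r (rm c r)) → gCaught c₀ cm ri rm) (r₀ : V) :
    ∃ n, CanCatchWithin M n c₀ r₀ := by
  classical
  by_contra hr₀
  have escape : ∀ c r, (¬∃ n, CanCatchWithin M n c r) →
      ∃ r', M r r' ∧ ¬∃ n, CanCatchWithin M n (cm c r) r' := by
    intro c r h
    by_contra! h'
    exact h (exists_canCatchWithin_of_forall_response (hcm c r) h')
  let rm : (Fin k → V) → V → V := fun c r =>
    if h : ∃ r', M r r' ∧ ¬∃ n, CanCatchWithin M n c r' then h.choose else (hM r).choose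
  have hrm : ∀ c r, M r (rm c r) := by
    intro c r
    simp only [rm]
    split_ifs with h
    exacts [h.choose_spec.1, (hM r).choose_spec]
  have hsafe : ∀ m, ¬∃ n, CanCatchWithin M n (gplay c₀ cm (fun _ => r₀) rm m).1
      (gplay c₀ cm (fun _ => r₀) rm m).2 := by
    intro m
    induction m with
    | zero => exact hr₀
    | succ m ih =>
      have hesc := escape _ _ ih
      simp only [gplay_succ, rm, dif_pos hesc]
      exact hesc.choose_spec.2
  obtain ⟨m, i, hi⟩ := hwin _ rm hrm
  refine hsafe m ⟨1, ?_⟩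
  rcases hi with hi | hi
  · exact Or.inl ⟨i, hi⟩
  · exact Or.inr ⟨_, hcm _ _, Or.inl ⟨i, hi⟩⟩

open Classical in
/-- Playing a good move of least horizon makes the horizon drop along every play. -/
noncomputable def catchingMove (hM : ∀ v, ∃ w, M v w) (c : ι → V) (r : V) : ι → V :=
  if h : ∃ n c', (∀ i, M (c i) (c' i)) ∧
      ((∃ i, c' i = r) ∨ ∀ r', M r r' → CanCatchWithin M n c' r') then
    (Nat.sInf_mem h).choose
  else fun i => (hM (c i)).choose

theorem catchingMove_rel (hM : ∀ v, ∃ w, M v w) (c : ι → V) (r : V) (i : ι) :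
    M (c i) (catchingMove hM c r i) := by
  unfold catchingMove
  split_ifs with h
  exacts [(Nat.sInf_mem h).choose_spec.1 i, (hM (c i)).choose_spec]

theorem catchingMove_spec (hM : ∀ v, ∃ w, M v w) {n : ℕ} {c : ι → V} {r : V}
    (h : CanCatchWithin M (n + 1) c r) (hc : ¬∃ i, c i = r) :
    (∃ i, catchingMove hM c r i = r) ∨
      ∀ r', M r r' → CanCatchWithin M n (catchingMove hM c r) r' := by
  have hn := h.resolve_left hc
  have hex : ∃ n c', (∀ i, M (c i) (c' i)) ∧
      ((∃ i, c' i = r) ∨ ∀ r', M r r' → CanCatchWithin M n c' r') := ⟨n, hn⟩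
  rw [catchingMove, dif_pos hex]
  exact (Nat.sInf_mem hex).choose_spec.2.imp_right fun h' r' hr' =>
    (h' r' hr').mono (Nat.sInf_le hn)

theorem gCaught_catchingMove {k : ℕ} (hM : ∀ v, ∃ w, M v w) {c₀ : Fin k → V}
    (h : ∀ r, ∃ n, CanCatchWithin M n c₀ r) (ri : (Fin k → V) → V)
    (rm : (Fin k → V) → V → V) (hrm : ∀ c r, M r (rm c r)) :
    gCaught c₀ (catchingMove hM) ri rm := by
  obtain ⟨n, hn⟩ := h (ri c₀)
  suffices ∀ n m, CanCatchWithin M n (gplay c₀ (catchingMove hM) ri rm m).1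
      (gplay c₀ (catchingMove hM) ri rm m).2 → gCaught c₀ (catchingMove hM) ri rm from
    this n 0 hn
  intro n
  induction n with
  | zero => exact fun _ h => h.elim
  | succ n ih =>
    intro m h
    by_cases hc : ∃ i, (gplay c₀ (catchingMove hM) ri rm m).1 i =
        (gplay c₀ (catchingMove hM) ri rm m).2
    · obtain ⟨i, hi⟩ := hc
      exact ⟨m, i, Or.inl hi⟩
    rcases catchingMove_spec hM h hc with ⟨i, hi⟩ | h'
    · exact ⟨m, i, Or.inr hi⟩
    · exact ih (m + 1) (h' _ (hrm _ _))

end CatchGame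

namespace SimpleGraph

def StayOrAdj (G : SimpleGraph V) (u v : V) : Prop := v = u ∨ G.Adj u v

def PairGuards (G : SimpleGraph V) (u a b : V) : Prop := (a = u ∨ b = u) ∧ G.Adj a b

theorem PairGuards.exists_step {G : SimpleGraph V} {u u' a b : V} (h : G.PairGuards u a b)
    (hu : G.StayOrAdj u u') :
    ∃ a' b', G.Adj a a' ∧ G.Adj b b' ∧ G.PairGuards u' a' b' := by
  obtain ⟨hu' | hu', hab⟩ := h <;> rcases hu with rfl | hu
  · exact ⟨b, a, hab, hab.symm, Or.inr hu', hab.symm⟩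
  · subst hu'
    exact ⟨u', a, hu, hab.symm, Or.inl rfl, hu.symm⟩
  · exact ⟨b, a, hab, hab.symm, Or.inl hu', hab.symm⟩
  · subst hu'
    exact ⟨b, u', hab, hu, Or.inr rfl, hu⟩

end SimpleGraph

def pairUp {k : ℕ} (a b : Fin k → V) (i : Fin (2 * k)) : V :=
  ![a, b] (finProdFinEquiv.symm i).1 (finProdFinEquiv.symm i).2

@[simp]
theorem pairUp_zero {k : ℕ} (a b : Fin k → V) (j : Fin k) :
    pairUp a b (finProdFinEquiv (0, j)) = a j := by
  simp [pairUp]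

@[simp]
theorem pairUp_one {k : ℕ} (a b : Fin k → V) (j : Fin k) :
    pairUp a b (finProdFinEquiv (1, j)) = b j := by
  simp [pairUp]

theorem pairUp_self {k : ℕ} (a : Fin k → V) (i : Fin (2 * k)) :
    pairUp a a i = a (finProdFinEquiv.symm i).2 := by
  obtain ⟨⟨s, j⟩, rfl⟩ := finProdFinEquiv.surjective i
  fin_cases s <;> simp

variable (G : SimpleGraph V) {k : ℕ}

theorem lazyCopsWin_natCard [Finite V] : LazyCopsWin G (Nat.card V) := by
  let e := Finite.equivFin V
  exact ⟨⟨⟨e.symm, fun c _ => c, fun _ _ _ => Or.inl rfl⟩, fun _ _ _ _ h => (h rfl).elim⟩,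
    fun RS => ⟨0, e (RS.init e.symm), Or.inl (e.symm_apply_apply _)⟩⟩

variable {G}

theorem LazyCopsWin.copsWin (h : LazyCopsWin G k) : CopsWin G k :=
  let ⟨CS, hCS⟩ := h
  ⟨CS.toCopStrat, hCS⟩

theorem CopsWin.exists_canCatchWithin [Finite V] (h : CopsWin G k) :
    ∃ c₀ : Fin k → V, ∀ r, ∃ n, CanCatchWithin G.StayOrAdj n c₀ r :=
  let ⟨CS, hCS⟩ := h
  ⟨CS.init, exists_canCatchWithin_of_forall_gCaught (M := G.StayOrAdj)
    (fun v => ⟨v, Or.inl rfl⟩) CS.valid fun ri rm hrm => hCS ⟨ri, rm, hrm⟩⟩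

theorem activeCopsWin_of_canCatchWithin (hG : ∀ v, ∃ w, G.Adj v w) {c₀ : Fin k → V}
    (h : ∀ r, ∃ n, CanCatchWithin G.Adj n c₀ r) : ActiveCopsWin G k :=
  ⟨⟨c₀, catchingMove hG, catchingMove_rel hG⟩,
    fun RS => gCaught_catchingMove hG h RS.init RS.move RS.valid⟩

theorem CopsWin.activeCopsWin_two_mul [Finite V] (hG : ∀ v, ∃ w, G.Adj v w)
    (h : CopsWin G k) : ActiveCopsWin G (2 * k) := by
  obtain ⟨c₀, hc₀⟩ := h.exists_canCatchWithin
  choose nbr hnbr using hG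
  let R (c : Fin k → V) (d : Fin (2 * k) → V) : Prop :=
    ∀ j, G.PairGuards (c j) (d (finProdFinEquiv (0, j))) (d (finProdFinEquiv (1, j)))
  have hcatch : ∀ c d r, R c d → (∃ j, c j = r) → ∃ i, d i = r := by
    rintro c d r hR ⟨j, rfl⟩
    obtain ⟨h | h, -⟩ := hR j
    exacts [⟨_, h⟩, ⟨_, h⟩]
  have hstep : ∀ c c' d, R c d → (∀ j, G.StayOrAdj (c j) (c' j)) →
      ∃ d', (∀ i, G.Adj (d i) (d' i)) ∧ R c' d' := by
    intro c c' d hR hc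
    choose a b ha hb hab using fun j => (hR j).exists_step (hc j)
    refine ⟨pairUp a b, fun i => ?_, fun j => by simpa using hab j⟩
    obtain ⟨⟨s, j⟩, rfl⟩ := finProdFinEquiv.surjective i
    fin_cases s
    exacts [by simpa using ha j, by simpa using hb j]
  refine activeCopsWin_of_canCatchWithin (fun v => ⟨_, hnbr v⟩)
    (c₀ := pairUp c₀ (nbr ∘ c₀)) fun r => ?_
  obtain ⟨n, hn⟩ := hc₀ r
  exact ⟨n, hn.of_simulation R hcatch hstep (fun _ _ => Or.inr)
    fun j => by simpa [SimpleGraph.PairGuards] using hnbr (c₀ j)⟩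

theorem activeCopNumber_le_two_mul [Finite V] (h : CopsWin G k) :
    activeCopNumber G ≤ 2 * k := by
  by_cases hG : ∀ v, ∃ w, G.Adj v w
  · exact Nat.sInf_le (h.activeCopsWin_two_mul hG)
  push Not at hG
  obtain ⟨v, hv⟩ := hG
  -- an isolated vertex leaves no legal move to a fully active robber
  have h₀ : ActiveCopsWin G 0 := ⟨⟨Fin.elim0, fun _ _ => Fin.elim0, fun _ _ i => i.elim0⟩,
    fun RS => (hv _ (RS.valid Fin.elim0 v)).elim⟩
  exact (Nat.sInf_le h₀).trans (Nat.zero_le _)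

section Attack

def AttackCopStrat.toCopStrat (CS : AttackCopStrat G k) : CopStrat G k where
  init := CS.init
  move c r i := (CS.move (fun j => some (c j)) r i).getD (c i)
  valid c r i := by
    rcases (CS.valid (fun j => some (c j)) r i).2 (c i) rfl with h | ⟨y, hy, h⟩
    · simp [h]
    · simp [h, hy]

theorem AttackCopStrat.move_some (CS : AttackCopStrat G k) (c : Fin k → V) (r : V) :
    CS.move (fun j => some (c j)) r = fun i => some (CS.toCopStrat.move c r i) := by
  funext i
  rcases (CS.valid (fun j => some (c j)) r i).2 (c i) rfl with h | ⟨y, -, h⟩ <;>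
    simp [toCopStrat, h]

open Classical in
noncomputable def CopStrat.doubled (CS : CopStrat G k) : AttackCopStrat G (2 * k) where
  init := pairUp CS.init CS.init
  -- the guard only matters away from configurations of doubled cops
  move co r i := (co i).map fun x =>
    let t := CS.move (fun j => (co (finProdFinEquiv (0, j))).getD r) r
      (finProdFinEquiv.symm i).2
    if G.StayOrAdj x t then t else x
  valid co r i := by
    refine ⟨fun h => by simp [h], fun x hx => ?_⟩
    simp only [hx, Option.map_some]
    split_ifs with h
    · rcases h with h | h
      · exact Or.inl (congrArg some h)
      · exact Or.inr ⟨_, h, rfl⟩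
    · exact Or.inl rfl

theorem CopStrat.doubled_move (CS : CopStrat G k) (c : Fin k → V) (r : V) :
    CS.doubled.move (fun i => some (pairUp c c i)) r =
      fun i => some (pairUp (CS.move c r) (CS.move c r) i) := by
  funext i
  simp only [doubled, Option.getD_some, Option.map_some, pairUp_self, Equiv.symm_apply_apply]
  split_ifs with h
  · rfl
  · simp only [Equiv.symm_apply_apply] at h
    exact absurd (CS.valid c r _) h

variable [DecidableEq V]

variable (G) in
theorem attackCopsWin_natCard [Finite V] : AttackCopsWin G (Nat.card V) := by
  let e := Finite.equivFin V
  refine ⟨⟨e.symm, fun c _ => c, fun _ _ _ => ⟨id, fun _ h => Or.inl h⟩⟩,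
    fun RS => ⟨0, Or.inl ⟨e (RS.init fun i => some (e.symm i)), ?_⟩⟩⟩
  simp [aplay]

theorem aplay_eq_of_simulation {m : ℕ} (CS : AttackCopStrat G m) (RS : AttackRobStrat G m)
    (f : (Fin k → V) → Fin m → V) {ci : Fin k → V} {cm : (Fin k → V) → V → Fin k → V}
    {ri : (Fin k → V) → V} {rm : (Fin k → V) → V → V}
    (h_init : CS.init = f ci) (h_rinit : RS.init (fun i => some (f ci i)) = ri ci)
    (h_move : ∀ c r, CS.move (fun i => some (f c i)) r = fun i => some (f (cm c r) i))
    (h_rmove : ∀ c r, RS.move (fun i => some (f c i)) r = rm c r)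
    (h_card : ∀ n,
      #{i | f (gplay ci cm ri rm (n + 1)).1 i = (gplay ci cm ri rm (n + 1)).2} ≠ 1)
    (n : ℕ) :
    aplay CS RS n = (fun i => some (f (gplay ci cm ri rm n).1 i), (gplay ci cm ri rm n).2) := by
  induction n with
  | zero => simp [aplay, gplay, h_init, h_rinit]
  | succ n ih =>
    have hc : CS.move (aplay CS RS n).1 (aplay CS RS n).2 =
        fun i => some (f (gplay ci cm ri rm (n + 1)).1 i) := by
      rw [ih]; exact h_move _ _
    have hr : RS.move (fun i => some (f (gplay ci cm ri rm (n + 1)).1 i)) (aplay CS RS n).2 =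
        (gplay ci cm ri rm (n + 1)).2 := by
      rw [h_rmove, ih]; rfl
    rw [aplay]
    simp only [hc, hr, Option.some_inj]
    rw [if_neg fun h => h_card n h.2]

theorem card_filter_pairUp_self_ne_one (a : Fin k → V) (x : V) :
    #{i | pairUp a a i = x} ≠ 1 := by
  intro h
  obtain ⟨i, hi⟩ := Finset.one_le_card.1 h.ge
  obtain ⟨⟨s, j⟩, rfl⟩ := finProdFinEquiv.surjective i
  have hj : a j = x := by
    simpa only [pairUp_self, Equiv.symm_apply_apply] using (Finset.mem_filter.1 hi).2
  have : 1 < #{i | pairUp a a i = x} := Finset.one_lt_card.2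
    ⟨finProdFinEquiv (0, j), by simp [hj], finProdFinEquiv (1, j), by simp [hj], by simp⟩
  omega

theorem AttackCopsWin.copsWin (h : AttackCopsWin G k) : CopsWin G k := by
  obtain ⟨CS, hCS⟩ := h
  refine ⟨CS.toCopStrat, fun RS => ?_⟩
  by_contra hRS
  simp only [gCaught, not_exists, not_or] at hRS
  let v₀ := RS.init CS.init
  let RS' : AttackRobStrat G k := ⟨fun co => RS.init fun j => (co j).getD v₀,
    fun co r => RS.move (fun j => (co j).getD v₀) r, fun _ r => RS.valid _ r⟩
  -- as long as the robber is not caught he never attacks, so the plays agree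
  have hplay := aplay_eq_of_simulation CS RS' (fun c => c) (ri := RS.init) (rm := RS.move)
    rfl rfl CS.move_some (fun _ _ => rfl)
    fun n h => by
      obtain ⟨i, hi⟩ := Finset.one_le_card.1 h.ge
      exact (hRS (n + 1) i).1 (Finset.mem_filter.1 hi).2
  obtain ⟨n, ⟨i, hi⟩ | ⟨i, hi⟩⟩ := hCS RS'
  · rw [hplay] at hi
    exact (hRS n i).1 (Option.some_injective _ hi)
  · rw [hplay, CS.move_some] at hi
    exact (hRS n i).2 (Option.some_injective _ hi)

theorem CopsWin.attackCopsWin_two_mul (h : CopsWin G k) : AttackCopsWin G (2 * k) := by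
  obtain ⟨CS, hCS⟩ := h
  refine ⟨CS.doubled, fun RS' => ?_⟩
  let RS : RobStrat G k := ⟨fun c => RS'.init fun i => some (pairUp c c i),
    fun c r => RS'.move (fun i => some (pairUp c c i)) r, fun _ r => RS'.valid _ r⟩
  -- twins share a vertex, so an attack never meets a lone cop
  have hplay := aplay_eq_of_simulation CS.doubled RS' (fun c => pairUp c c)
    (ri := RS.init) (rm := RS.move) rfl rfl
    CS.doubled_move (fun _ _ => rfl) fun _ => card_filter_pairUp_self_ne_one _ _
  obtain ⟨n, j, hj | hj⟩ := hCS RS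
  · exact ⟨n, Or.inl ⟨finProdFinEquiv (0, j), by simp [hplay, hj]⟩⟩
  · exact ⟨n, Or.inr ⟨finProdFinEquiv (0, j), by simp [hplay, CS.doubled_move, hj]⟩⟩

end Attack

theorem copNumber_variant_bounds_general
    {V : Type*} [Fintype V] [DecidableEq V] (G : SimpleGraph V) :
    copNumber G ≤ lazyCopNumber G ∧
      (copNumber G ≤ attackCopNumber G ∧ attackCopNumber G ≤ 2 * copNumber G) ∧
      activeCopNumber G ≤ 2 * copNumber G := by
  have hcop : CopsWin G (copNumber G) :=
    Nat.sInf_mem (s := {k | CopsWin G k}) ⟨_, (lazyCopsWin_natCard G).copsWin⟩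
  have hlazy : LazyCopsWin G (lazyCopNumber G) :=
    Nat.sInf_mem (s := {k | LazyCopsWin G k}) ⟨_, lazyCopsWin_natCard G⟩
  have hattack : AttackCopsWin G (attackCopNumber G) :=
    Nat.sInf_mem (s := {k | AttackCopsWin G k}) ⟨_, attackCopsWin_natCard G⟩
  exact ⟨Nat.sInf_le hlazy.copsWin,
    ⟨Nat.sInf_le hattack.copsWin, Nat.sInf_le hcop.attackCopsWin_two_mul⟩,
    activeCopNumber_le_two_mul hcop⟩

/-- For any connected graph `G`:
(a) `c(G) ≤ c_lazy(G)`; (b) `c(G) ≤ c_attack(G) ≤ 2·c(G)`; (c) `c_active(G) ≤ 2·c(G)`. -/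
theorem copNumber_variant_bounds
    {V : Type*} [Fintype V] [DecidableEq V] (G : SimpleGraph V) (hG : G.Connected) :
    copNumber G ≤ lazyCopNumber G ∧
      (copNumber G ≤ attackCopNumber G ∧ attackCopNumber G ≤ 2 * copNumber G) ∧
      activeCopNumber G ≤ 2 * copNumber G :=
  copNumber_variant_bounds_general G
end
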